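/- arXiv:2212.05167 — 6 statements merged into one kernel-verified Lean document; each statement's English description precedes it below -/
import Mathlib

section
/- If G is a hereditarily unicoherent topological graph and {G_α : α ∈ A} is a nonempty family of closed connected subsets of V(G), then the intersection ⋂{G_α : α ∈ A} is connected. -/
/-- A subset `S` of the vertices of a topological graph is connected if it cannot be
partitioned into two nonempty relatively closed sets with no edge between them. -/
def TConnSet {V : Type*} [TopologicalSpace V] (E : V → V → Prop) (S : Set V) : Prop :=
  ¬ ∃ P Q : Set V, P.Nonempty ∧ Q.Nonempty ∧ Disjoint P Q ∧ P ∪ Q = S ∧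
      IsClosed {x : S | (x : V) ∈ P} ∧ IsClosed {x : S | (x : V) ∈ Q} ∧
      ∀ a ∈ P, ∀ b ∈ Q, ¬ E a b

/-- A topological graph structure: a closed, reflexive, symmetric edge relation. -/
def IsTopGraph {V : Type*} [TopologicalSpace V] (E : V → V → Prop) : Prop :=
  (∀ v, E v v) ∧ (∀ a b, E a b → E b a) ∧ IsClosed {p : V × V | E p.1 p.2}

/-- An epimorphism of topological graphs: continuous, edge-preserving, surjective on
vertices and on edges. -/
def IsTopEpi {V W : Type*} [TopologicalSpace V] [TopologicalSpace W]
    (EG : V → V → Prop) (EH : W → W → Prop) (f : V → W) : Prop :=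
  Continuous f ∧ (∀ a b, EG a b → EH (f a) (f b)) ∧ Function.Surjective f ∧
    ∀ c d, EH c d → ∃ a b, EG a b ∧ f a = c ∧ f b = d

/-- A topological graph is hereditarily unicoherent if the intersection of any two
closed connected subsets is connected. -/
def HerUnicoherent {V : Type*} [TopologicalSpace V] (E : V → V → Prop) : Prop :=
  ∀ P Q : Set V, IsClosed P → IsClosed Q → TConnSet E P → TConnSet E Q →
    TConnSet E (P ∩ Q)

/-! Suppose `⋂ i, G i = P ∪ Q` is a separation. Both pieces are compact, and since the edge
relation is closed the tube lemma thickens them to open sets `U ⊇ P`, `W ⊇ Q` with no edge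
between them. By compactness some finite intersection `⋂ i ∈ s, G i` already lies in `U ∪ W`,
so `U` and `W` separate it; but hereditary unicoherence makes every finite intersection of the
`G i` connected. -/

open Set

section TopologicalGraph

variable {V : Type*} [TopologicalSpace V] {E : V → V → Prop}

lemma IsClosed.of_isClosed_preimage_val {S P : Set V} (hS : IsClosed S) (hPS : P ⊆ S)
    (hP : IsClosed {x : S | (x : V) ∈ P}) : IsClosed P := by
  simpa [inter_eq_right.2 hPS] using (hS.inter_preimage_val_iff (t := P)).1 hP

lemma exists_isOpen_superset_forall_not_edge (hE : IsClosed {p : V × V | E p.1 p.2})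
    {P Q : Set V} (hP : IsCompact P) (hQ : IsCompact Q) (hPQ : ∀ a ∈ P, ∀ b ∈ Q, ¬ E a b) :
    ∃ U W : Set V, IsOpen U ∧ IsOpen W ∧ P ⊆ U ∧ Q ⊆ W ∧ ∀ a ∈ U, ∀ b ∈ W, ¬ E a b := by
  obtain ⟨U, W, hU, hW, hPU, hQW, hUW⟩ :=
    generalized_tube_lemma hP hQ hE.isOpen_compl fun p hp ↦ hPQ p.1 hp.1 p.2 hp.2
  exact ⟨U, W, hU, hW, hPU, hQW, fun a ha b hb ↦ hUW (mk_mem_prod ha hb)⟩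

lemma not_tconnSet_of_subset_union (hrefl : ∀ v, E v v) {S U W : Set V}
    (hU : IsOpen U) (hW : IsOpen W) (hUW : ∀ a ∈ U, ∀ b ∈ W, ¬ E a b) (hS : S ⊆ U ∪ W)
    (hSU : (S ∩ U).Nonempty) (hSW : (S ∩ W).Nonempty) : ¬ TConnSet E S := by
  have hdisj : Disjoint U W := disjoint_left.2 fun a haU haW ↦ hUW a haU a haW (hrefl a)
  have hmem_U : ∀ x : S, (x : V) ∈ U ↔ (x : V) ∉ W := fun x ↦
    ⟨fun hxU hxW ↦ disjoint_left.1 hdisj hxU hxW, (hS x.2).resolve_right⟩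
  have hcompl_U : {x : S | (x : V) ∈ S ∩ U} = ((↑) ⁻¹' W : Set S)ᶜ := by
    ext x; simp [hmem_U x]
  have hcompl_W : {x : S | (x : V) ∈ S ∩ W} = ((↑) ⁻¹' U : Set S)ᶜ := by
    ext x; simp [hmem_U x]
  refine not_not.2 ⟨S ∩ U, S ∩ W, hSU, hSW, hdisj.mono inter_subset_right inter_subset_right,
    by rw [← inter_union_distrib_left, inter_eq_left.2 hS], ?_, ?_,
    fun a ha b hb ↦ hUW a ha.2 b hb.2⟩
  · rw [hcompl_U]
    exact (hW.preimage continuous_subtype_val).isClosed_compl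
  · rw [hcompl_W]
    exact (hU.preimage continuous_subtype_val).isClosed_compl

lemma HerUnicoherent.tconnSet_biInter (hHU : HerUnicoherent E) {ι : Type*} {G : ι → Set V}
    (hclosed : ∀ i, IsClosed (G i)) (hconn : ∀ i, TConnSet E (G i)) {s : Finset ι}
    (hs : s.Nonempty) : TConnSet E (⋂ i ∈ s, G i) := by
  classical
  induction hs using Finset.Nonempty.cons_induction with
  | singleton i => simpa only [Finset.set_biInter_singleton] using hconn i
  | cons i s _ _ ih =>
    rw [Finset.cons_eq_insert, Finset.set_biInter_insert]
    exact hHU _ _ (hclosed i) (isClosed_biInter fun j _ ↦ hclosed j) (hconn i) ih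

end TopologicalGraph

lemma exists_finset_biInter_subset_of_iInter_subset {X ι : Type*} [TopologicalSpace X]
    [CompactSpace X] [Nonempty ι] {G : ι → Set X} (hclosed : ∀ i, IsClosed (G i)) {O : Set X}
    (hO : IsOpen O) (h : ⋂ i, G i ⊆ O) : ∃ s : Finset ι, s.Nonempty ∧ ⋂ i ∈ s, G i ⊆ O := by
  classical
  obtain ⟨s, hs⟩ := hO.isClosed_compl.isCompact.elim_finite_subfamily_closed G hclosed
    (by rwa [inter_comm, ← sdiff_eq, sdiff_eq_empty])
  obtain ⟨i⟩ := ‹Nonempty ι›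
  refine ⟨insert i s, Finset.insert_nonempty i s, ?_⟩
  rw [inter_comm, ← sdiff_eq, sdiff_eq_empty] at hs
  exact (biInter_subset_biInter_left fun j hj ↦ Finset.mem_insert_of_mem hj).trans hs

theorem statement2_general {V : Type*} [TopologicalSpace V] [CompactSpace V]
    (E : V → V → Prop) (hG : IsTopGraph E) (hHU : HerUnicoherent E)
    {ι : Type*} [Nonempty ι] (G : ι → Set V)
    (hclosed : ∀ i, IsClosed (G i)) (hconn : ∀ i, TConnSet E (G i)) :
    TConnSet E (⋂ i, G i) := by
  rintro ⟨P, Q, ⟨p, hp⟩, ⟨q, hq⟩, -, hPQ, hPcl, hQcl, hnoE⟩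
  have hScl : IsClosed (⋂ i, G i) := isClosed_iInter hclosed
  have hP := hScl.of_isClosed_preimage_val (hPQ ▸ subset_union_left) hPcl
  have hQ := hScl.of_isClosed_preimage_val (hPQ ▸ subset_union_right) hQcl
  obtain ⟨U, W, hU, hW, hPU, hQW, hUW⟩ :=
    exists_isOpen_superset_forall_not_edge hG.2.2 hP.isCompact hQ.isCompact hnoE
  obtain ⟨s, hs, hsUW⟩ := exists_finset_biInter_subset_of_iInter_subset hclosed (hU.union hW)
    (hPQ ▸ union_subset_union hPU hQW)
  have hmem : ⋂ i, G i ⊆ ⋂ i ∈ s, G i := fun x hx ↦ mem_biInter fun i _ ↦ mem_iInter.1 hx i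
  exact not_tconnSet_of_subset_union hG.1 hU hW hUW hsUW
    ⟨p, hmem (hPQ ▸ Or.inl hp), hPU hp⟩ ⟨q, hmem (hPQ ▸ Or.inr hq), hQW hq⟩
    (hHU.tconnSet_biInter hclosed hconn hs)

/-- In a hereditarily unicoherent topological graph, the intersection of any nonempty
family of closed connected subsets is connected. -/
theorem statement2 {V : Type*} [TopologicalSpace V] [CompactSpace V]
    [TopologicalSpace.MetrizableSpace V] [TotallyDisconnectedSpace V]
    (E : V → V → Prop) (hG : IsTopGraph E) (hHU : HerUnicoherent E)
    {ι : Type*} [Nonempty ι] (G : ι → Set V)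
    (hclosed : ∀ i, IsClosed (G i)) (hconn : ∀ i, TConnSet E (G i)) :
    TConnSet E (⋂ i, G i) :=
  statement2_general E hG hHU G hclosed hconn
end

section
/- If f : G → H is a monotone epimorphism between topological graphs and G is an arc with end vertices a and b, then H is an arc and f(a), f(b) are end vertices of H; in particular every vertex of V(H) \ {f(a), f(b)} disconnects H. -/
open Set Function

section

variable {V W : Type*} [TopologicalSpace V] [TopologicalSpace W]

/-- A witness of `¬ TConnSet E S`, with relative closedness in `S` expressed through closures
in `V`. -/
structure IsSeparation (E : V → V → Prop) (S P Q : Set V) : Prop where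
  nonempty_left : P.Nonempty
  nonempty_right : Q.Nonempty
  disjoint : Disjoint P Q
  union_eq : P ∪ Q = S
  closure_left : S ∩ closure P ⊆ P
  closure_right : S ∩ closure Q ⊆ Q
  not_adj : ∀ a ∈ P, ∀ b ∈ Q, ¬ E a b

theorem not_tConnSet_iff {E : V → V → Prop} {S : Set V} :
    ¬ TConnSet E S ↔ ∃ P Q, IsSeparation E S P Q := by
  have hclosed : ∀ P ⊆ S, IsClosed {x : S | (x : V) ∈ P} ↔ S ∩ closure P ⊆ P := by
    intro P hP
    have h := isClosed_preimage_val (s := S) (t := P)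
    rwa [inter_eq_right.2 hP] at h
  rw [TConnSet, not_not]
  constructor
  · rintro ⟨P, Q, hP, hQ, hd, hu, hcP, hcQ, he⟩
    exact ⟨P, Q, hP, hQ, hd, hu, (hclosed P (hu ▸ subset_union_left)).1 hcP,
      (hclosed Q (hu ▸ subset_union_right)).1 hcQ, he⟩
  · rintro ⟨P, Q, hP, hQ, hd, hu, hcP, hcQ, he⟩
    exact ⟨P, Q, hP, hQ, hd, hu, (hclosed P (hu ▸ subset_union_left)).2 hcP,
      (hclosed Q (hu ▸ subset_union_right)).2 hcQ, he⟩

theorem tConnSet_iff {E : V → V → Prop} {S : Set V} :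
    TConnSet E S ↔ ∀ P Q, ¬ IsSeparation E S P Q := by
  rw [← not_not (a := TConnSet E S), not_tConnSet_iff, not_exists]
  exact forall_congr' fun _ => not_exists

theorem tConnSet_singleton {E : V → V → Prop} (x : V) : TConnSet E {x} := by
  rintro ⟨P, Q, ⟨p, hp⟩, ⟨q, hq⟩, hd, hu, -⟩
  have hp' : p ∈ P ∪ Q := Or.inl hp
  have hq' : q ∈ P ∪ Q := Or.inr hq
  rw [hu, mem_singleton_iff] at hp' hq'
  subst hp' hq'
  exact disjoint_left.1 hd hp hq

namespace IsSeparation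

variable {E : V → V → Prop} {S P Q T : Set V} {x : V}

theorem not_tConnSet (h : IsSeparation E S P Q) : ¬ TConnSet E S :=
  not_tConnSet_iff.2 ⟨P, Q, h⟩

theorem symm (h : IsSeparation E S P Q) (hE : ∀ a b, E a b → E b a) : IsSeparation E S Q P where
  nonempty_left := h.nonempty_right
  nonempty_right := h.nonempty_left
  disjoint := h.disjoint.symm
  union_eq := union_comm Q P ▸ h.union_eq
  closure_left := h.closure_right
  closure_right := h.closure_left
  not_adj a ha b hb hab := h.not_adj b hb a ha (hE a b hab)

theorem subset_left (h : IsSeparation E S P Q) : P ⊆ S := h.union_eq ▸ subset_union_left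

theorem subset_right (h : IsSeparation E S P Q) : Q ⊆ S := h.union_eq ▸ subset_union_right

theorem mem_or_mem (h : IsSeparation E S P Q) (hx : x ∈ S) : x ∈ P ∨ x ∈ Q := by
  rwa [← h.union_eq] at hx

theorem restrict (h : IsSeparation E S P Q) (hTS : T ⊆ S) (hP : (T ∩ P).Nonempty)
    (hQ : (T ∩ Q).Nonempty) : IsSeparation E T (T ∩ P) (T ∩ Q) where
  nonempty_left := hP
  nonempty_right := hQ
  disjoint := h.disjoint.mono inter_subset_right inter_subset_right
  union_eq := by rw [← inter_union_distrib_left, h.union_eq, inter_eq_left.2 hTS]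
  closure_left _ hz :=
    ⟨hz.1, h.closure_left ⟨hTS hz.1, closure_mono inter_subset_right hz.2⟩⟩
  closure_right _ hz :=
    ⟨hz.1, h.closure_right ⟨hTS hz.1, closure_mono inter_subset_right hz.2⟩⟩
  not_adj a ha b hb := h.not_adj a ha.2 b hb.2

theorem subset_or_subset (h : IsSeparation E S P Q) (hTS : T ⊆ S) (hT : TConnSet E T) :
    T ⊆ P ∨ T ⊆ Q := by
  by_contra! hc
  obtain ⟨⟨p, hpT, hpP⟩, ⟨q, hqT, hqQ⟩⟩ := And.intro (not_subset.1 hc.1) (not_subset.1 hc.2)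
  exact (h.restrict hTS ⟨q, hqT, (h.mem_or_mem (hTS hqT)).resolve_right hqQ⟩
    ⟨p, hpT, (h.mem_or_mem (hTS hpT)).resolve_left hpP⟩).not_tConnSet hT

theorem closure_right_subset_insert (h : IsSeparation E (S \ {x}) P Q) (hS : IsClosed S) :
    closure Q ⊆ insert x Q := by
  intro z hz
  by_cases hzx : z = x
  · exact Or.inl hzx
  · exact Or.inr (h.closure_right
      ⟨⟨hS.closure_subset_iff.2 (h.subset_right.trans sdiff_subset) hz, hzx⟩, hz⟩)

theorem isClosed_insert_right [T1Space V] (h : IsSeparation E (S \ {x}) P Q)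
    (hS : IsClosed S) : IsClosed (insert x Q) := by
  refine isClosed_of_closure_subset ?_
  rw [← singleton_union, closure_union, closure_singleton]
  exact union_subset subset_union_left (h.closure_right_subset_insert hS)

theorem glue [T1Space V] (h : IsSeparation E (S \ {x}) P Q) (hS : IsClosed S) (hx : x ∈ S)
    {R T : Set V} (hd : IsSeparation E (insert x Q) R T) (hxR : x ∈ R) :
    IsSeparation E S (P ∪ R) T := by
  have hTQ : T ⊆ Q := fun z hz =>
    (hd.subset_right hz).resolve_left fun hzx => disjoint_left.1 hd.disjoint (hzx ▸ hxR) hz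
  have hcl : ∀ {U}, U ⊆ insert x Q → closure U ⊆ insert x Q := fun hU =>
    (h.isClosed_insert_right hS).closure_subset_iff.2 hU
  refine ⟨⟨x, Or.inr hxR⟩, hd.nonempty_right,
    disjoint_union_left.2 ⟨h.disjoint.mono_right hTQ, hd.disjoint⟩, ?_, ?_, ?_, ?_⟩
  · rw [union_assoc, hd.union_eq, union_insert, h.union_eq, insert_sdiff_singleton,
      insert_eq_of_mem hx]
  · rintro z ⟨hzS, hz⟩
    rw [closure_union] at hz
    rcases hz with hz | hz
    · by_cases hzx : z = x
      · exact Or.inr (hzx ▸ hxR)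
      · exact Or.inl (h.closure_left ⟨⟨hzS, hzx⟩, hz⟩)
    · exact Or.inr (hd.closure_left ⟨hcl hd.subset_left hz, hz⟩)
  · exact fun z hz => hd.closure_right ⟨hcl hd.subset_right hz.2, hz.2⟩
  · rintro a (ha | ha) b hb
    · exact h.not_adj a ha b (hTQ hb)
    · exact hd.not_adj a ha b hb

theorem tConnSet_insert_right [T1Space V] (h : IsSeparation E (S \ {x}) P Q)
    (hE : ∀ a b, E a b → E b a)
    (hS : TConnSet E S) (hSc : IsClosed S) (hx : x ∈ S) : TConnSet E (insert x Q) := by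
  refine tConnSet_iff.2 fun R T hd => ?_
  rcases hd.mem_or_mem (mem_insert x Q) with hxR | hxT
  · exact (h.glue hSc hx hd hxR).not_tConnSet hS
  · exact (h.glue hSc hx (hd.symm hE) hxT).not_tConnSet hS

end IsSeparation

section Separations

variable {E : V → V → Prop}

theorem exists_isSeparation_subset_left (hE : ∀ a b, E a b → E b a) {S T : Set V}
    (hS : ¬ TConnSet E S) (hTS : T ⊆ S) (hT : TConnSet E T) :
    ∃ P Q, IsSeparation E S P Q ∧ T ⊆ P := by
  obtain ⟨P, Q, h⟩ := not_tConnSet_iff.1 hS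
  rcases h.subset_or_subset hTS hT with hP | hQ
  · exact ⟨P, Q, h, hP⟩
  · exact ⟨Q, P, h.symm hE, hQ⟩

theorem IsSeparation.insert_subset_left [T1Space V] (hE : ∀ a b, E a b → E b a)
    {D A B A' B' : Set V} {x q q' : V} (hD : TConnSet E D) (hDc : IsClosed D) (hq : q ∈ D)
    (h : IsSeparation E (D \ {q}) A B) (hxB : x ∈ B)
    (h' : IsSeparation E (D \ {q'}) A' B') (hxB' : x ∈ B') (hq' : q' ∈ A) :
    insert q' A' ⊆ A := by
  have hq'q : q' ≠ q := (h.subset_left hq').2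
  have hB : insert q B ⊆ B' := by
    have hsub : insert q B ⊆ D \ {q'} := insert_subset ⟨hq, hq'q.symm⟩
      fun z hz => ⟨(h.subset_right hz).1, fun hzq' => disjoint_left.1 h.disjoint (hzq' ▸ hq') hz⟩
    refine (h'.subset_or_subset hsub (h.tConnSet_insert_right hE hD hDc hq)).resolve_left
      fun hA' => disjoint_left.1 h'.disjoint (hA' (mem_insert_of_mem q hxB)) hxB'
  refine insert_subset hq' fun z hz => ?_
  have hzq : z ≠ q := fun hzq => disjoint_left.1 h'.disjoint hz (hB (hzq ▸ mem_insert z B))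
  exact (h.mem_or_mem ⟨(h'.subset_left hz).1, hzq⟩).resolve_right
    fun hzB => disjoint_left.1 h'.disjoint hz (hB (mem_insert_of_mem q hzB))

theorem exists_minimal_of_nested [CompactSpace V] {Ω : Set V} (hΩ : Ω.Nonempty) (C : V → Set V)
    (hmem : ∀ q ∈ Ω, q ∈ C q) (hsub : ∀ q ∈ Ω, C q ⊆ Ω) (hcl : ∀ q ∈ Ω, IsClosed (C q))
    (hnest : ∀ q ∈ Ω, ∀ q' ∈ C q, C q' ⊆ C q) :
    ∃ q ∈ Ω, ∀ q' ∈ C q, C q ⊆ C q' := by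
  have hchain : ∀ c ⊆ C '' Ω, IsChain (· ⊆ ·) c → c.Nonempty →
      ∃ lb ∈ C '' Ω, ∀ s ∈ c, lb ⊆ s := by
    rintro c hc hchain ⟨s₀, hs₀⟩
    have : Nonempty c := ⟨⟨s₀, hs₀⟩⟩
    obtain ⟨z, hz⟩ : (⋂₀ c).Nonempty := by
      have hdir : DirectedOn (· ⊇ ·) c := fun s hs t ht =>
        (hchain.total hs ht).elim (fun hst => ⟨s, hs, subset_rfl, hst⟩)
          (fun hts => ⟨t, ht, hts, subset_rfl⟩)
      refine IsCompact.nonempty_sInter_of_directed_nonempty_isCompact_isClosed hdir ?_ ?_ ?_ <;>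
        intro U hU <;> obtain ⟨q, hq, rfl⟩ := hc hU
      exacts [⟨q, hmem q hq⟩, (hcl q hq).isCompact, hcl q hq]
    obtain ⟨q₀, hq₀, rfl⟩ := hc hs₀
    refine ⟨C z, mem_image_of_mem C (hsub q₀ hq₀ (hz _ hs₀)), fun s hs => ?_⟩
    obtain ⟨q, hq, rfl⟩ := hc hs
    exact hnest q hq z (hz _ hs)
  obtain ⟨q, hq⟩ := hΩ
  obtain ⟨m, -, hm⟩ := zorn_superset_nonempty (C '' Ω) hchain (C q) (mem_image_of_mem C hq)
  obtain ⟨q, hq, rfl⟩ := hm.prop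
  exact ⟨q, hq, fun q' hq' =>
    hm.2 (mem_image_of_mem C (hsub q hq hq')) (hnest q hq q' hq')⟩

/-- The non-cut point theorem. -/
theorem exists_tConnSet_diff_singleton [CompactSpace V] [T1Space V]
    (hE : ∀ a b, E a b → E b a) {D : Set V} (hDc : IsClosed D) (hD : TConnSet E D) {x : V}
    (hx : x ∈ D) (hp : ∃ p ∈ D, p ≠ x) : ∃ q ∈ D, q ≠ x ∧ TConnSet E (D \ {q}) := by
  by_contra! hcut
  have hsep : ∀ q ∈ D \ {x}, ∃ A B, IsSeparation E (D \ {q}) A B ∧ x ∈ B := by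
    rintro q ⟨hqD, hqx⟩
    obtain ⟨B, A, h, hxB⟩ := exists_isSeparation_subset_left hE (hcut q hqD hqx)
      (singleton_subset_iff.2 ⟨hx, Ne.symm hqx⟩) (tConnSet_singleton x)
    exact ⟨A, B, h.symm hE, hxB rfl⟩
  choose! A B hsep hxB using hsep
  have hsub : ∀ q ∈ D \ {x}, insert q (A q) ⊆ D \ {x} := fun q hq =>
    insert_subset hq fun z hz => ⟨((hsep q hq).subset_left hz).1,
      fun hzx => disjoint_left.1 (hsep q hq).disjoint hz (hzx ▸ hxB q hq)⟩
  have hnest : ∀ q ∈ D \ {x}, ∀ r ∈ A q, insert r (A r) ⊆ A q := fun q hq r hr =>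
    have hr' := hsub q hq (Or.inr hr)
    IsSeparation.insert_subset_left hE hD hDc hq.1 (hsep q hq) (hxB q hq) (hsep r hr')
      (hxB r hr') hr
  obtain ⟨p, hpD, hpx⟩ := hp
  obtain ⟨q, hq, hmin⟩ := exists_minimal_of_nested (Ω := D \ {x}) ⟨p, hpD, hpx⟩
    (fun q => insert q (A q)) (fun q _ => mem_insert q (A q)) hsub
    (fun q hq => ((hsep q hq).symm hE).isClosed_insert_right hDc)
    (fun q hq r hr => hr.elim (fun hrq => hrq ▸ subset_rfl)
      fun hr => (hnest q hq r hr).trans (subset_insert q (A q)))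
  obtain ⟨r, hr⟩ := (hsep q hq).nonempty_left
  exact ((hsep q hq).subset_left
    (hnest q hq r hr (hmin r (Or.inr hr) (mem_insert q (A q))))).2 rfl

theorem IsSeparation.not_tConnSet_insert_diff [T1Space V] (hE : ∀ a b, E a b → E b a)
    (hG : TConnSet E univ) {P Q : Set V} {x q : V} (h : IsSeparation E (univ \ {x}) P Q)
    (hq : q ∈ Q) (hcut : ¬ TConnSet E (univ \ {q})) : ¬ TConnSet E (insert x Q \ {q}) := by
  have hxq : x ≠ q := fun hxq => (h.subset_right hq).2 hxq.symm
  obtain ⟨P₂, Q₂, h₂, hP₂⟩ := exists_isSeparation_subset_left hE hcut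
    (insert_subset ⟨trivial, hxq⟩
      fun z hz => ⟨trivial, fun hzq => disjoint_left.1 h.disjoint (hzq ▸ hz) hq⟩)
    ((h.symm hE).tConnSet_insert_right hE hG isClosed_univ (mem_univ x))
  have hQ₂ : Q₂ ⊆ insert x Q \ {q} := fun z hz =>
    have hzP : z ∉ insert x P := fun hzP => disjoint_left.1 h₂.disjoint (hP₂ hzP) hz
    ⟨Or.inr ((h.mem_or_mem ⟨trivial, fun hzx => hzP (Or.inl hzx)⟩).resolve_left
      fun hzP' => hzP (Or.inr hzP')), (h₂.subset_right hz).2⟩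
  obtain ⟨z, hz⟩ := h₂.nonempty_right
  exact (h₂.restrict (sdiff_subset_sdiff_left (subset_univ _))
    ⟨x, ⟨mem_insert x Q, hxq⟩, hP₂ (mem_insert x P)⟩ ⟨z, hQ₂ hz, hz⟩).not_tConnSet

theorem not_tConnSet_univ_diff_of_forall_cut [CompactSpace V] [T1Space V]
    (hE : ∀ a b, E a b → E b a) (hG : TConnSet E univ) {K : Set V} (hK : K.Nonempty)
    (hcut : ∀ q ∈ K, ¬ TConnSet E (univ \ {q})) : ¬ TConnSet E (univ \ K) := by
  intro hKc
  obtain ⟨x, hx⟩ := hK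
  obtain ⟨P, Q, h, hP⟩ := exists_isSeparation_subset_left hE (hcut x hx)
    (sdiff_subset_sdiff_right (singleton_subset_iff.2 hx)) hKc
  have hQK : Q ⊆ K := fun z hz =>
    by_contra fun hzK => disjoint_left.1 h.disjoint (hP ⟨trivial, hzK⟩) hz
  obtain ⟨p, hp⟩ := h.nonempty_right
  obtain ⟨q, hqD, hqx, hq⟩ := exists_tConnSet_diff_singleton hE
    (h.isClosed_insert_right isClosed_univ)
    (h.tConnSet_insert_right hE hG isClosed_univ (mem_univ x)) (mem_insert x Q)
    ⟨p, Or.inr hp, (h.subset_right hp).2⟩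
  have hqQ : q ∈ Q := hqD.resolve_left hqx
  exact h.not_tConnSet_insert_diff hE hG hqQ (hcut q (hQK hqQ)) hq

end Separations

section Maps

variable {EG : V → V → Prop} {EH : W → W → Prop} {f : V → W}

theorem TConnSet.image (hf : Continuous f) (hmap : ∀ a b, EG a b → EH (f a) (f b)) {S : Set V}
    (hS : TConnSet EG S) : TConnSet EH (f '' S) := by
  refine tConnSet_iff.2 fun P Q h => ?_
  have hne : ∀ {R}, R.Nonempty → R ⊆ f '' S → (S ∩ f ⁻¹' R).Nonempty := by
    rintro R ⟨_, hr⟩ hR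
    obtain ⟨u, hu, rfl⟩ := hR hr
    exact ⟨u, hu, hr⟩
  refine IsSeparation.not_tConnSet (P := S ∩ f ⁻¹' P) (Q := S ∩ f ⁻¹' Q) ⟨hne h.nonempty_left
    h.subset_left, hne h.nonempty_right h.subset_right,
    (h.disjoint.preimage f).mono inter_subset_right inter_subset_right, ?_, ?_, ?_, ?_⟩ hS
  · rw [← inter_union_distrib_left, ← preimage_union, h.union_eq]
    exact inter_eq_left.2 (subset_preimage_image f S)
  · exact fun z ⟨hzS, hz⟩ => ⟨hzS, h.closure_left ⟨mem_image_of_mem f hzS,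
      hf.closure_preimage_subset P (closure_mono inter_subset_right hz)⟩⟩
  · exact fun z ⟨hzS, hz⟩ => ⟨hzS, h.closure_right ⟨mem_image_of_mem f hzS,
      hf.closure_preimage_subset Q (closure_mono inter_subset_right hz)⟩⟩
  · exact fun a ha b hb hab => h.not_adj _ ha.2 _ hb.2 (hmap a b hab)

theorem TConnSet.preimage (hf : IsClosedMap f) (hsurj : Surjective f)
    (hlift : ∀ c d, EH c d → ∃ a b, EG a b ∧ f a = c ∧ f b = d) {T : Set W}
    (hfib : ∀ y ∈ T, TConnSet EG (f ⁻¹' {y})) (hT : TConnSet EH T) :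
    TConnSet EG (f ⁻¹' T) := by
  refine tConnSet_iff.2 fun P Q h => ?_
  have hsat : ∀ u ∈ f ⁻¹' T, f ⁻¹' {f u} ⊆ P ∨ f ⁻¹' {f u} ⊆ Q := fun u hu =>
    h.subset_or_subset (preimage_mono (singleton_subset_iff.2 hu)) (hfib _ hu)
  have hP : f ⁻¹' (f '' P) ⊆ P := by
    rintro v ⟨u, hu, huv⟩
    exact (hsat u (h.subset_left hu)).resolve_right
      (fun hQ => disjoint_left.1 h.disjoint hu (hQ rfl)) huv.symm
  have hQ : f ⁻¹' (f '' Q) ⊆ Q := by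
    rintro v ⟨u, hu, huv⟩
    exact (hsat u (h.subset_right hu)).resolve_left
      (fun hP => disjoint_left.1 h.disjoint (hP rfl) hu) huv.symm
  refine IsSeparation.not_tConnSet (P := f '' P) (Q := f '' Q) ⟨h.nonempty_left.image f,
    h.nonempty_right.image f, ?_, ?_, ?_, ?_, ?_⟩ hT
  · exact disjoint_left.2 fun _ ⟨u, hu, hfu⟩ hQu => disjoint_left.1 h.disjoint hu
      (hQ (show f u ∈ f '' Q from hfu ▸ hQu))
  · rw [← image_union, h.union_eq, image_preimage_eq T hsurj]
  · rintro c ⟨hc, hcl⟩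
    obtain ⟨u, hu, rfl⟩ := hf.closure_image_subset P hcl
    exact ⟨u, h.closure_left ⟨hc, hu⟩, rfl⟩
  · rintro c ⟨hc, hcl⟩
    obtain ⟨u, hu, rfl⟩ := hf.closure_image_subset Q hcl
    exact ⟨u, h.closure_right ⟨hc, hu⟩, rfl⟩
  · rintro c hc d hd hcd
    obtain ⟨u, v, huv, rfl, rfl⟩ := hlift c d hcd
    exact h.not_adj u (hP hc) v (hQ hd) huv

end Maps

end

theorem statement3_general {V W : Type*} [TopologicalSpace V] [TopologicalSpace W]
    [CompactSpace V]
    [TopologicalSpace.MetrizableSpace V] [TopologicalSpace.MetrizableSpace W]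
    (EG : V → V → Prop) (EH : W → W → Prop)
    (hG : IsTopGraph EG)
    (f : V → W) (hf : IsTopEpi EG EH f)
    (hmono : ∀ y : W, TConnSet EG (f ⁻¹' {y}))
    (a b : V)
    (hGconn : TConnSet EG Set.univ)
    (hab : ∀ x : V, x ≠ a → x ≠ b → ¬ TConnSet EG (Set.univ \ {x})) :
    TConnSet EH Set.univ ∧
      ∀ y : W, y ≠ f a → y ≠ f b → ¬ TConnSet EH (Set.univ \ {y}) := by
  obtain ⟨-, hE, -⟩ := hG
  obtain ⟨hcont, hmap, hsurj, hlift⟩ := hf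
  refine ⟨image_univ_of_surjective hsurj ▸ hGconn.image hcont hmap, fun y hya hyb hy => ?_⟩
  have hcompl : TConnSet EG (univ \ f ⁻¹' {y}) := by
    simpa only [preimage_sdiff, preimage_univ] using
      hy.preimage hcont.isClosedMap hsurj hlift fun z _ => hmono z
  refine not_tConnSet_univ_diff_of_forall_cut hE hGconn (hsurj y) ?_ hcompl
  rintro x rfl
  exact hab x (fun hxa => hya (congrArg f hxa)) fun hxb => hyb (congrArg f hxb)

/-- If `f : G → H` is a monotone epimorphism between topological graphs and `G` is an
arc with end vertices `a, b`, then `H` is an arc with end vertices `f a, f b`: `H` is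
connected and every vertex other than `f a`, `f b` disconnects it. -/
theorem statement3 {V W : Type*} [TopologicalSpace V] [TopologicalSpace W]
    [CompactSpace V] [CompactSpace W]
    [TopologicalSpace.MetrizableSpace V] [TopologicalSpace.MetrizableSpace W]
    [TotallyDisconnectedSpace V] [TotallyDisconnectedSpace W]
    (EG : V → V → Prop) (EH : W → W → Prop)
    (hG : IsTopGraph EG) (hH : IsTopGraph EH)
    (f : V → W) (hf : IsTopEpi EG EH f)
    (hmono : ∀ y : W, TConnSet EG (f ⁻¹' {y}))
    (a b : V)
    (hGconn : TConnSet EG Set.univ)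
    (hab : ∀ x : V, x ≠ a → x ≠ b → ¬ TConnSet EG (Set.univ \ {x})) :
    TConnSet EH Set.univ ∧
      ∀ y : W, y ≠ f a → y ≠ f b → ¬ TConnSet EH (Set.univ \ {y}) :=
  statement3_general EG EH hG f hf hmono a b hGconn hab
end

section
/- For every finite tree G there exist a finite tree H in which every vertex has order at most 3 and no two vertices of order 3 are joined by an edge, and a monotone epimorphism f : H → G. -/
/-- A (reflexive, symmetric) graph relation. -/
def IsGraph {V : Type*} (E : V → V → Prop) : Prop :=
  (∀ v, E v v) ∧ ∀ a b, E a b → E b a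

/-- A subset `S` of the vertices of a graph is connected if it cannot be partitioned
into two nonempty sets with no edge between them. -/
def ConnSet {V : Type*} (E : V → V → Prop) (S : Set V) : Prop :=
  ¬ ∃ P Q : Set V, P.Nonempty ∧ Q.Nonempty ∧ Disjoint P Q ∧ P ∪ Q = S ∧
      ∀ a ∈ P, ∀ b ∈ Q, ¬ E a b

/-- `C` is a (connected) component of `S`: a maximal connected subset of `S`. -/
def IsComponent {V : Type*} (E : V → V → Prop) (S C : Set V) : Prop :=
  C ⊆ S ∧ ConnSet E C ∧ ∀ C' : Set V, C ⊆ C' → C' ⊆ S → ConnSet E C' → C' = C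

/-- An epimorphism of graphs: edge-preserving, surjective on vertices and on edges. -/
def IsEpi {V W : Type*} (EG : V → V → Prop) (EH : W → W → Prop) (f : V → W) : Prop :=
  (∀ a b, EG a b → EH (f a) (f b)) ∧ Function.Surjective f ∧
    ∀ c d, EH c d → ∃ a b, EG a b ∧ f a = c ∧ f b = d

/-- A map is monotone if the preimage of every vertex is connected. -/
def IsMonotone {V W : Type*} (EG : V → V → Prop) (f : V → W) : Prop :=
  ∀ y : W, ConnSet EG (f ⁻¹' {y})

/-- A map is light if no edge joins two distinct points of a fiber. -/
def IsLight {V W : Type*} (EG : V → V → Prop) (f : V → W) : Prop :=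
  ∀ a b : V, f a = f b → a ≠ b → ¬ EG a b

/-- Confluence: every component of the preimage of a connected set maps onto that set. -/
def IsConfluent {V W : Type*} (EG : V → V → Prop) (EH : W → W → Prop) (f : V → W) : Prop :=
  ∀ Q : Set W, ConnSet EH Q → ∀ C : Set V, IsComponent EG (f ⁻¹' Q) C → f '' C = Q

/-- `l` is a (simple) path from `a` to `b` in the graph. -/
def IsPathList {V : Type*} (E : V → V → Prop) (a b : V) (l : List V) : Prop :=
  l.Nodup ∧ l.Chain' E ∧ l.head? = some a ∧ l.getLast? = some b

/-- A finite graph is a tree if any two distinct vertices are joined by a unique path. -/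
def IsTreeRel {V : Type*} (E : V → V → Prop) : Prop :=
  ∀ a b : V, a ≠ b → ∃! l : List V, IsPathList E a b l

/-- The order of a vertex: the number of non-degenerate edges containing it. -/
noncomputable def vertexOrder {V : Type*} (E : V → V → Prop) (p : V) : ℕ :=
  Set.ncard {q : V | q ≠ p ∧ E p q}

/-!
Induct on the number of vertices of `G`, removing a leaf `lf` with neighbour `u`, and carry
along the extra invariant that every vertex of `G` has a preimage of order at most one. Given
such a cover of `G - lf`, pick a preimage `h` of `u` of order at most one, attach a new vertex
`m` at `h`, and two new leaves at `m`, sending `m` and one leaf to `u` and the other leaf to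
`lf`. Then `m` is the only new vertex of order 3 and its neighbours have order at most 2, the
fibres stay connected, and the two new leaves restore the invariant at `u` and `lf`.
-/

section Paths
variable {V W : Type*} {E : V → V → Prop} {a b x : V} {l : List V}

lemma IsPathList.ne_nil (hl : IsPathList E a b l) : l ≠ [] := by
  rintro rfl
  exact absurd hl.2.2.1 (by simp)

lemma IsPathList.eq_singleton_of_self (hl : IsPathList E a a l) : l = [a] := by
  obtain ⟨x, t, rfl⟩ := List.exists_cons_of_ne_nil hl.ne_nil
  obtain rfl : x = a := Option.some_injective _ hl.2.2.1
  rcases t.eq_nil_or_concat with rfl | ⟨t, y, rfl⟩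
  · rfl
  · have hlast := hl.2.2.2
    rw [List.concat_eq_append, ← List.cons_append, List.getLast?_concat, Option.some_inj] at hlast
    subst hlast
    simpa using hl.1

lemma isPathList_singleton (a : V) : IsPathList E a a [a] :=
  ⟨List.nodup_singleton a, List.isChain_singleton a, rfl, rfl⟩

lemma IsPathList.two_le_length (hab : a ≠ b) (hl : IsPathList E a b l) : 2 ≤ l.length := by
  obtain ⟨x, t, rfl⟩ := List.exists_cons_of_ne_nil hl.ne_nil
  rcases t with _ | ⟨y, t⟩
  · exact absurd ((Option.some_injective _ hl.2.2.1).symm.trans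
      (Option.some_injective _ hl.2.2.2)) hab
  · simp

lemma IsPathList.reverse (hsym : ∀ x y, E x y → E y x) (hl : IsPathList E a b l) :
    IsPathList E b a l.reverse :=
  ⟨List.nodup_reverse.mpr hl.1, List.isChain_reverse.mpr (hl.2.1.imp fun x y h => hsym x y h),
    by rw [List.head?_reverse]; exact hl.2.2.2, by rw [List.getLast?_reverse]; exact hl.2.2.1⟩

lemma IsPathList.map {E' : W → W → Prop} {e : V → W} (he : Function.Injective e)
    (hE : ∀ x y, E x y → E' (e x) (e y)) (hl : IsPathList E a b l) :
    IsPathList E' (e a) (e b) (l.map e) :=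
  ⟨hl.1.map he, (List.isChain_map e).mpr (hl.2.1.imp fun x y => hE x y),
    by rw [List.head?_map, hl.2.2.1]; rfl, by rw [List.getLast?_map, hl.2.2.2]; rfl⟩

lemma IsPathList.of_map {E' : W → W → Prop} {e : V → W} (he : Function.Injective e)
    (hE : ∀ x y, E' (e x) (e y) → E x y) (hl : IsPathList E' (e a) (e b) (l.map e)) :
    IsPathList E a b l := by
  obtain ⟨hnd, hc, hh, hlast⟩ := hl
  refine ⟨hnd.of_map e, ((List.isChain_map e).mp hc).imp fun x y => hE x y, ?_, ?_⟩
  · rw [List.head?_map, Option.map_eq_some_iff] at hh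
    obtain ⟨c, hc, hca⟩ := hh
    rwa [← he hca]
  · rw [List.getLast?_map, Option.map_eq_some_iff] at hlast
    obtain ⟨c, hc, hcb⟩ := hlast
    rwa [← he hcb]

/-- An interior vertex of a path has two distinct neighbours on it. -/
lemma IsPathList.mem_endpoints_of_subsingleton (hsym : ∀ x y, E x y → E y x)
    (hx : {q | q ≠ x ∧ E x q}.Subsingleton) (hl : IsPathList E a b l) (hmem : x ∈ l) :
    x = a ∨ x = b := by
  by_contra! hxab
  obtain ⟨i, hi, rfl⟩ := List.getElem_of_mem hmem
  have hfirst : l[0]? = some a := List.head?_eq_getElem? ▸ hl.2.2.1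
  have hlast : l[l.length - 1]? = some b := List.getLast?_eq_getElem? ▸ hl.2.2.2
  have hi0 : i ≠ 0 := by
    rintro rfl
    exact hxab.1 (Option.some_injective _ ((List.getElem?_eq_getElem hi).symm.trans hfirst))
  have hi1 : i + 1 < l.length := by
    by_contra
    obtain rfl : i = l.length - 1 := by omega
    exact hxab.2 (Option.some_injective _ ((List.getElem?_eq_getElem hi).symm.trans hlast))
  obtain ⟨j, rfl⟩ := Nat.exists_eq_add_one_of_ne_zero hi0
  have hchain := List.isChain_iff_getElem.mp hl.2.1
  have hprev : l[j] ∈ {q | q ≠ l[j + 1] ∧ E l[j + 1] q} :=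
    ⟨fun h => by have := (hl.1.getElem_inj_iff).mp h; omega, hsym _ _ (hchain j hi)⟩
  have hnext : l[j + 2] ∈ {q | q ≠ l[j + 1] ∧ E l[j + 1] q} :=
    ⟨fun h => by have := (hl.1.getElem_inj_iff).mp h; omega, hchain (j + 1) hi1⟩
  have := (hl.1.getElem_inj_iff).mp (hx hprev hnext)
  omega

lemma IsPathList.exists_eq_map {E' : W → W → Prop} {e : V → W} {l : List W}
    (he : Function.Injective e) (hE : ∀ x y, E' (e x) (e y) → E x y)
    (hl : IsPathList E' (e a) (e b) l) (hrange : ∀ y ∈ l, y ∈ Set.range e) :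
    ∃ l' : List V, l = l'.map e ∧ IsPathList E a b l' := by
  have : CanLift W V e (· ∈ Set.range e) := ⟨fun _ h => h⟩
  lift l to List V using hrange
  exact ⟨l, rfl, hl.of_map he hE⟩

lemma existsUnique_isPathList_comm (hsym : ∀ x y, E x y → E y x)
    (h : ∃! l, IsPathList E a b l) : ∃! l, IsPathList E b a l := by
  obtain ⟨l, hl, huniq⟩ := h
  refine ⟨l.reverse, hl.reverse hsym, fun m hm => ?_⟩
  rw [← huniq m.reverse (hm.reverse hsym), List.reverse_reverse]

lemma IsTreeRel.existsUnique (hT : IsTreeRel E) (a b : V) : ∃! l, IsPathList E a b l := by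
  rcases eq_or_ne a b with rfl | hab
  · exact ⟨[a], isPathList_singleton a, fun l hl => hl.eq_singleton_of_self⟩
  · exact hT a b hab

/-- Paths are unchanged by adding or removing vertices of order at most one that are not
endpoints. -/
lemma existsUnique_isPathList_embedding_iff {E' : W → W → Prop} {e : V → W}
    (he : Function.Injective e) (hE : ∀ x y, E' (e x) (e y) ↔ E x y)
    (hsym : ∀ x y, E' x y → E' y x)
    (hout : ∀ y ∉ Set.range e, {q | q ≠ y ∧ E' y q}.Subsingleton) :
    (∃! l, IsPathList E a b l) ↔ ∃! l, IsPathList E' (e a) (e b) l := by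
  have hlift : ∀ l, IsPathList E' (e a) (e b) l → ∃ l', l = l'.map e ∧ IsPathList E a b l' :=
    fun l hl => hl.exists_eq_map he (fun x y => (hE x y).mp) fun y hy => by
      by_contra hy'
      rcases hl.mem_endpoints_of_subsingleton hsym (hout y hy') hy with rfl | rfl <;> simp at hy'
  constructor
  · rintro ⟨l, hl, huniq⟩
    refine ⟨l.map e, hl.map he fun x y => (hE x y).mpr, fun m hm => ?_⟩
    obtain ⟨m', rfl, hm'⟩ := hlift m hm
    rw [huniq m' hm']
  · rintro ⟨l, hl, huniq⟩
    obtain ⟨l', rfl, hl'⟩ := hlift l hl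
    exact ⟨l', hl', fun m hm =>
      List.map_injective_iff.mpr he (huniq _ (hm.map he fun x y => (hE x y).mpr))⟩

lemma existsUnique_isPathList_of_leaf {y : V} (hsym : ∀ x y, E x y → E y x)
    (hx : {q | q ≠ x ∧ E x q} = {y}) (hxb : x ≠ b) (h : ∃! l, IsPathList E y b l) :
    ∃! l, IsPathList E x b l := by
  have hy : y ≠ x ∧ E x y := (Set.ext_iff.mp hx y).mpr rfl
  obtain ⟨l, hl, huniq⟩ := h
  have hxl : x ∉ l := fun hmem => by
    rcases hl.mem_endpoints_of_subsingleton hsym (hx ▸ Set.subsingleton_singleton) hmem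
      with h | h
    exacts [hy.1 h.symm, hxb h]
  obtain ⟨z, t, rfl⟩ := List.exists_cons_of_ne_nil hl.ne_nil
  refine ⟨x :: z :: t, ⟨List.nodup_cons.mpr ⟨hxl, hl.1⟩, ?_, rfl, ?_⟩, fun m hm => ?_⟩
  · exact List.isChain_cons_cons.mpr ⟨Option.some_injective _ hl.2.2.1 ▸ hy.2, hl.2.1⟩
  · rw [List.getLast?_cons_cons]; exact hl.2.2.2
  obtain ⟨x', m, rfl⟩ := List.exists_cons_of_ne_nil hm.ne_nil
  obtain rfl : x' = x := Option.some_injective _ hm.2.2.1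
  have hm_ne : m ≠ [] := by
    rintro rfl
    exact hxb (Option.some_injective _ hm.2.2.2)
  obtain ⟨w, m, rfl⟩ := List.exists_cons_of_ne_nil hm_ne
  have hw : w = y := by
    refine (Set.ext_iff.mp hx w).mp ⟨fun h => ?_, (List.isChain_cons_cons.mp hm.2.1).1⟩
    exact (List.nodup_cons.mp hm.1).1 (h ▸ List.mem_cons_self)
  subst hw
  rw [huniq (w :: m) ⟨(List.nodup_cons.mp hm.1).2, (List.isChain_cons_cons.mp hm.2.1).2, rfl,
    by rw [← hm.2.2.2, List.getLast?_cons_cons]⟩]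

lemma IsTreeRel.subtype_ne (hsym : ∀ x y, E x y → E y x) (hT : IsTreeRel E)
    (hx : {q | q ≠ x ∧ E x q}.Subsingleton) : IsTreeRel fun a b : {v // v ≠ x} => E a b :=
  fun a b _ => (existsUnique_isPathList_embedding_iff Subtype.val_injective
    (fun _ _ => Iff.rfl) hsym (fun y hy => by simp_all)).mpr (hT.existsUnique a b)

end Paths

section Connected
variable {V W : Type*} {E : V → V → Prop} {S P Q : Set V}

lemma ConnSet.of_subsingleton (hS : S.Subsingleton) : ConnSet E S := by
  rintro ⟨P, Q, ⟨p, hp⟩, ⟨q, hq⟩, hdisj, rfl, -⟩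
  exact hdisj.ne_of_mem hp hq (hS (Or.inl hp) (Or.inr hq))

lemma ConnSet.subset_or_subset (hS : ConnSet E S) (hcover : S ⊆ P ∪ Q) (hdisj : Disjoint P Q)
    (hno : ∀ a ∈ P, ∀ b ∈ Q, ¬ E a b) : S ⊆ P ∨ S ⊆ Q := by
  by_contra! h
  obtain ⟨⟨q, hqS, hqP⟩, ⟨p, hpS, hpQ⟩⟩ := And.intro
    (Set.not_subset.mp h.1) (Set.not_subset.mp h.2)
  refine hS ⟨P ∩ S, Q ∩ S, ⟨p, (hcover hpS).resolve_right hpQ, hpS⟩,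
    ⟨q, (hcover hqS).resolve_left hqP, hqS⟩, hdisj.mono Set.inter_subset_left
    Set.inter_subset_left, ?_, fun a ha b hb => hno a ha.1 b hb.1⟩
  rw [← Set.union_inter_distrib_right, Set.inter_eq_right.mpr hcover]

lemma ConnSet.image {E' : W → W → Prop} {e : V → W} (hE : ∀ x y, E x y → E' (e x) (e y))
    (hS : ConnSet E S) : ConnSet E' (e '' S) := by
  rintro ⟨P, Q, ⟨p, hp⟩, ⟨q, hq⟩, hdisj, hPQ, hno⟩
  have hcover : S ⊆ e ⁻¹' P ∪ e ⁻¹' Q := fun x hx =>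
    (show e x ∈ P ∪ Q from hPQ ▸ Set.mem_image_of_mem e hx)
  rcases hS.subset_or_subset hcover (hdisj.preimage e)
      (fun a ha b hb hab => hno _ ha _ hb (hE a b hab)) with h | h
  · obtain ⟨x, hx, rfl⟩ : q ∈ e '' S := hPQ ▸ Or.inr hq
    exact hdisj.ne_of_mem (h hx) hq rfl
  · obtain ⟨x, hx, rfl⟩ : p ∈ e '' S := hPQ ▸ Or.inl hp
    exact hdisj.ne_of_mem hp (h hx) rfl

lemma ConnSet.insert (hsym : ∀ x y, E x y → E y x) (hS : ConnSet E S) {s w : V} (hs : s ∈ S)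
    (hsw : E s w) : ConnSet E (insert w S) := by
  rintro ⟨P, Q, ⟨p, hp⟩, ⟨q, hq⟩, hdisj, hPQ, hno⟩
  have hcover : S ⊆ P ∪ Q := hPQ ▸ Set.subset_insert w S
  have hmem : ∀ {x}, x ∈ P ∪ Q → x = w ∨ x ∈ S := fun hx => (hPQ ▸ hx : _ ∈ Insert.insert w S)
  rcases hS.subset_or_subset hcover hdisj hno with h | h
  · rcases hmem (Or.inr hq) with rfl | hqS
    · exact hno s (h hs) q hq hsw
    · exact hdisj.ne_of_mem (h hqS) hq rfl
  · rcases hmem (Or.inl hp) with rfl | hpS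
    · exact hno p hp s (h hs) (hsym s p hsw)
    · exact hdisj.ne_of_mem hp (h hpS) rfl

end Connected

section AttachLeaf
variable {V : Type*} {E : V → V → Prop} {h : V}

def attachLeaf (E : V → V → Prop) (h : V) : Option V → Option V → Prop
  | some a, some b => E a b
  | some a, none => a = h
  | none, some b => b = h
  | none, none => True

lemma attachLeaf_symm (hsym : ∀ x y, E x y → E y x) :
    ∀ x y, attachLeaf E h x y → attachLeaf E h y x
  | none, none, _ => trivial
  | none, some _, hxy | some _, none, hxy => hxy
  | some x, some y, hxy => hsym x y hxy

lemma IsGraph.attachLeaf (hG : IsGraph E) : IsGraph (attachLeaf E h) :=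
  ⟨fun v => by cases v; exacts [trivial, hG.1 _], attachLeaf_symm hG.2⟩

lemma attachLeaf_neighbors_none : {q | q ≠ none ∧ attachLeaf E h none q} = {some h} := by
  ext (_ | b) <;> simp [attachLeaf]

lemma existsUnique_isPathList_attachLeaf_some (hsym : ∀ x y, E x y → E y x) (hT : IsTreeRel E)
    (a b : V) : ∃! l, IsPathList (attachLeaf E h) (some a) (some b) l := by
  refine (existsUnique_isPathList_embedding_iff (Option.some_injective V) (fun _ _ => Iff.rfl)
    (attachLeaf_symm hsym) fun y hy => ?_).mp (hT.existsUnique a b)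
  obtain rfl : y = none := by cases y <;> simp_all
  rw [attachLeaf_neighbors_none]
  exact Set.subsingleton_singleton

lemma existsUnique_isPathList_attachLeaf_none (hsym : ∀ x y, E x y → E y x) (hT : IsTreeRel E)
    (b : V) : ∃! l, IsPathList (attachLeaf E h) none (some b) l :=
  existsUnique_isPathList_of_leaf (attachLeaf_symm hsym) attachLeaf_neighbors_none
    (Option.some_ne_none b).symm (existsUnique_isPathList_attachLeaf_some hsym hT h b)

lemma IsTreeRel.attachLeaf (hsym : ∀ x y, E x y → E y x) (hT : IsTreeRel E) :
    IsTreeRel (attachLeaf E h)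
  | none, none, hab => absurd rfl hab
  | none, some b, _ => existsUnique_isPathList_attachLeaf_none hsym hT b
  | some a, none, _ => existsUnique_isPathList_comm (attachLeaf_symm hsym)
      (existsUnique_isPathList_attachLeaf_none hsym hT a)
  | some a, some b, _ => existsUnique_isPathList_attachLeaf_some hsym hT a b

lemma vertexOrder_attachLeaf_none : vertexOrder (attachLeaf E h) none = 1 := by
  rw [vertexOrder, attachLeaf_neighbors_none, Set.ncard_singleton]

lemma vertexOrder_attachLeaf_self [Finite V] :
    vertexOrder (attachLeaf E h) (some h) = vertexOrder E h + 1 := by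
  have : {q | q ≠ some h ∧ attachLeaf E h (some h) q} =
      insert none (some '' {q | q ≠ h ∧ E h q}) := by
    ext (_ | b) <;> simp [attachLeaf]
  rw [vertexOrder, this, Set.ncard_insert_of_notMem (by simp),
    Set.ncard_image_of_injective _ (Option.some_injective V), vertexOrder]

lemma vertexOrder_attachLeaf_of_ne {x : V} (hx : x ≠ h) :
    vertexOrder (attachLeaf E h) (some x) = vertexOrder E x := by
  have : {q | q ≠ some x ∧ attachLeaf E h (some x) q} = some '' {q | q ≠ x ∧ E x q} := by
    ext (_ | b) <;> simp [attachLeaf, hx]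
  rw [vertexOrder, this, Set.ncard_image_of_injective _ (Option.some_injective V), vertexOrder]

end AttachLeaf

section Maps
variable {H G : Type*} {E : H → H → Prop} {EG : G → G → Prop} {f : H → G} {h : H}

lemma IsMonotone.comp_injective {W : Type*} {g : G → W} (hf : IsMonotone E f)
    (hg : Function.Injective g) : IsMonotone E (g ∘ f) := by
  intro y
  by_cases hy : y ∈ Set.range g
  · obtain ⟨x, rfl⟩ := hy
    have : g ∘ f ⁻¹' {g x} = f ⁻¹' {x} := by ext; simp [hg.eq_iff]
    exact this ▸ hf x
  · refine ConnSet.of_subsingleton fun a ha => ?_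
    exact absurd ⟨f a, ha⟩ hy

lemma IsMonotone.attachLeaf (hsym : ∀ x y, E x y → E y x) {g : Option H → G}
    (hg : IsMonotone E (g ∘ some)) (hnew : g none = g (some h) ∨ ∀ x, g (some x) ≠ g none) :
    IsMonotone (attachLeaf E h) g := by
  intro y
  by_cases hy : g none = y
  · subst hy
    rcases hnew with hnew | hnew
    · have : g ⁻¹' {g none} = insert none (some '' (g ∘ some ⁻¹' {g none})) := by
        ext (_ | x) <;> simp
      have himage : ConnSet (_root_.attachLeaf E h) (some '' (g ∘ some ⁻¹' {g none})) :=
        (hg _).image fun _ _ hxy => hxy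
      rw [this]
      exact himage.insert (attachLeaf_symm hsym) ⟨h, hnew.symm, rfl⟩ rfl
    · refine ConnSet.of_subsingleton fun a ha b hb => ?_
      cases a <;> cases b <;> simp_all
  · have : g ⁻¹' {y} = some '' (g ∘ some ⁻¹' {y}) := by
      ext (_ | x) <;> simp [hy]
    rw [this]
    exact (hg y).image fun _ _ hxy => hxy

lemma IsEpi.attachLeaf_of_eq (hrefl : ∀ v, EG v v) (hf : IsEpi E EG f) :
    IsEpi (attachLeaf E h) EG fun o => o.elim (f h) f := by
  refine ⟨?_, fun v => ?_, fun c d hcd => ?_⟩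
  · rintro (_ | a) (_ | b) hab
    exacts [hrefl _, hab ▸ hrefl _, hab ▸ hrefl _, hf.1 a b hab]
  · obtain ⟨x, rfl⟩ := hf.2.1 v
    exact ⟨some x, rfl⟩
  · obtain ⟨a, b, hab, rfl, rfl⟩ := hf.2.2 c d hcd
    exact ⟨some a, some b, hab, rfl, rfl⟩

lemma IsEpi.attachLeaf_of_neighbors_eq {lf : G} {f : H → {v // v ≠ lf}} (hG : IsGraph EG)
    (hlf : {q | q ≠ lf ∧ EG lf q} = {(f h).1})
    (hf : IsEpi E (fun a b : {v // v ≠ lf} => EG a b) f) :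
    IsEpi (attachLeaf E h) EG fun o => o.elim lf fun x => (f x).1 := by
  have hadj : EG lf (f h) := ((Set.ext_iff.mp hlf _).mpr rfl).2
  have hnb : ∀ v, v ≠ lf → EG lf v → v = f h := fun v hv hlv =>
    (Set.ext_iff.mp hlf v).mp ⟨hv, hlv⟩
  refine ⟨?_, fun v => ?_, fun c d hcd => ?_⟩
  · rintro (_ | a) (_ | b) hab
    exacts [hG.1 lf, hab ▸ hadj, hab ▸ hG.2 _ _ hadj, hf.1 a b hab]
  · by_cases hv : v = lf
    · exact ⟨none, hv.symm⟩
    · obtain ⟨x, hx⟩ := hf.2.1 ⟨v, hv⟩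
      exact ⟨some x, congrArg Subtype.val hx⟩
  · by_cases hc : c = lf <;> by_cases hd : d = lf
    · exact ⟨none, none, trivial, hc.symm, hd.symm⟩
    · subst hc
      exact ⟨none, some h, rfl, rfl, (hnb d hd hcd).symm⟩
    · subst hd
      exact ⟨some h, none, rfl, (hnb c hc (hG.2 _ _ hcd)).symm, rfl⟩
    · obtain ⟨a, b, hab, ha, hb⟩ := hf.2.2 ⟨c, hc⟩ ⟨d, hd⟩ hcd
      exact ⟨some a, some b, hab, congrArg Subtype.val ha, congrArg Subtype.val hb⟩

end Maps

lemma IsTreeRel.exists_leaf {V : Type*} [Finite V] [Nontrivial V] {E : V → V → Prop}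
    (hsym : ∀ x y, E x y → E y x) (hT : IsTreeRel E) :
    ∃ lf u : V, {q | q ≠ lf ∧ E lf q} = {u} := by
  have := Fintype.ofFinite V
  -- the first vertex of a longest path is a leaf
  let S := {l : List V | l.Nodup ∧ l.IsChain E}
  have hfin : S.Finite := (List.finite_length_le V (Fintype.card V)).subset
    fun l hl => hl.1.length_le_card
  obtain ⟨a, b, hab⟩ := exists_pair_ne V
  obtain ⟨p, hp, -⟩ := hT a b hab
  obtain ⟨l, ⟨hnd, hch⟩, hmax⟩ := S.exists_max_image List.length hfin ⟨p, hp.1, hp.2.1⟩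
  obtain ⟨a, x, t, rfl⟩ : ∃ a x t, l = a :: x :: t := by
    match l, (hp.two_le_length hab).trans (hmax p ⟨hp.1, hp.2.1⟩) with
    | a :: x :: t, _ => exact ⟨a, x, t, rfl⟩
  have hax : x ≠ a := fun h => by simp [h] at hnd
  refine ⟨a, x, Set.eq_singleton_iff_unique_mem.mpr
    ⟨⟨hax, (List.isChain_cons_cons.mp hch).1⟩, fun q ⟨hqa, haq⟩ => ?_⟩⟩
  by_cases hq : q ∈ a :: x :: t
  · obtain ⟨i, hi, rfl⟩ := List.getElem_of_mem hq
    have hi0 : i ≠ 0 := by rintro rfl; exact hqa rfl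
    have hpath : IsPathList E a (a :: x :: t)[i] ((a :: x :: t).take (i + 1)) :=
      ⟨hnd.sublist (List.take_sublist _ _), hch.take _, by simp,
        by rw [List.getLast?_take]; simp [List.getElem?_eq_getElem hi]⟩
    have hedge : IsPathList E a (a :: x :: t)[i] [a, (a :: x :: t)[i]] :=
      ⟨by simpa using hqa.symm, List.isChain_pair.mpr haq, rfl, rfl⟩
    have := congrArg (·[1]?) ((hT _ _ hqa.symm).unique hpath hedge)
    simp only [List.getElem?_take, if_pos (show 1 < i + 1 by omega)] at this
    simpa using this.symm
  · have := hmax (q :: a :: x :: t) ⟨List.nodup_cons.mpr ⟨hq, hnd⟩,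
      List.isChain_cons_cons.mpr ⟨hsym _ _ haq, hch⟩⟩
    simp at this

def IsSparselyBranched {V : Type*} (E : V → V → Prop) : Prop :=
  (∀ p, vertexOrder E p ≤ 3) ∧
    ∀ p q, p ≠ q → E p q → ¬ (vertexOrder E p = 3 ∧ vertexOrder E q = 3)

lemma IsSparselyBranched.attachLeaf {V : Type*} [Finite V] {E : V → V → Prop} {h : V}
    (hsym : ∀ x y, E x y → E y x) (hE : IsSparselyBranched E) (hh : vertexOrder E h ≤ 2)
    (hnb : ∀ q, q ≠ h → E h q → vertexOrder E h ≤ 1 ∨ vertexOrder E q ≤ 2) :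
    IsSparselyBranched (attachLeaf E h) := by
  have hbranch : ∀ q, q ≠ h → E h q → ¬ (vertexOrder E h + 1 = 3 ∧ vertexOrder E q = 3) :=
    fun q hq hhq => by rcases hnb q hq hhq with h' | h' <;> omega
  refine ⟨?_, ?_⟩
  · rintro (_ | x)
    · rw [vertexOrder_attachLeaf_none]; omega
    · by_cases hx : x = h
      · rw [hx, vertexOrder_attachLeaf_self]; omega
      · rw [vertexOrder_attachLeaf_of_ne hx]; exact hE.1 x
  · rintro (_ | x) (_ | y) hxy hadj
    · exact absurd rfl hxy
    · rw [vertexOrder_attachLeaf_none]; omega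
    · rw [vertexOrder_attachLeaf_none]; omega
    by_cases hx : x = h <;> by_cases hy : y = h
    · exact absurd (by rw [hx, hy]) hxy
    · subst hx
      rw [vertexOrder_attachLeaf_self, vertexOrder_attachLeaf_of_ne hy]
      exact hbranch y hy hadj
    · subst hy
      rw [vertexOrder_attachLeaf_self, vertexOrder_attachLeaf_of_ne hx]
      exact fun h' => hbranch x hx (hsym _ _ hadj) h'.symm
    · rw [vertexOrder_attachLeaf_of_ne hx, vertexOrder_attachLeaf_of_ne hy]
      exact hE.2 x y (fun h' => hxy (congrArg some h')) hadj

lemma vertexOrder_eq_zero_of_subsingleton {V : Type*} [Subsingleton V]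
    (E : V → V → Prop) (p : V) : vertexOrder E p = 0 := by
  rw [vertexOrder, Set.ncard_eq_zero]
  exact Set.eq_empty_of_forall_notMem fun q hq => hq.1 (Subsingleton.elim q p)

structure LeafyCover {G : Type*} (EG : G → G → Prop) where
  H : Type
  [finite : Finite H]
  E : H → H → Prop
  isGraph : IsGraph E
  isTreeRel : IsTreeRel E
  sparse : IsSparselyBranched E
  f : H → G
  isEpi : IsEpi E EG f
  isMonotone : IsMonotone E f
  exists_preimage_vertexOrder_le_one : ∀ v, ∃ w, f w = v ∧ vertexOrder E w ≤ 1

attribute [instance] LeafyCover.finite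

namespace LeafyCover
variable {G : Type*} {EG : G → G → Prop}

noncomputable def ofSubsingleton [Subsingleton G] (hG : IsGraph EG) : LeafyCover EG where
  H := {_u : Unit // Nonempty G}
  E _ _ := True
  isGraph := ⟨fun _ => trivial, fun _ _ _ => trivial⟩
  isTreeRel a b hab := absurd (Subsingleton.elim a b) hab
  sparse := ⟨fun p => by rw [vertexOrder_eq_zero_of_subsingleton]; omega,
    fun p q hpq => absurd (Subsingleton.elim p q) hpq⟩
  f w := Classical.choice w.2
  isEpi := ⟨fun _ _ _ => by convert hG.1 _,
    fun v => ⟨⟨(), ⟨v⟩⟩, Subsingleton.elim _ _⟩,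
    fun c d _ => ⟨⟨(), ⟨c⟩⟩, ⟨(), ⟨d⟩⟩, trivial, Subsingleton.elim _ _, Subsingleton.elim _ _⟩⟩
  isMonotone _ := ConnSet.of_subsingleton Set.subsingleton_of_subsingleton
  exists_preimage_vertexOrder_le_one v :=
    ⟨⟨(), ⟨v⟩⟩, Subsingleton.elim _ _, by rw [vertexOrder_eq_zero_of_subsingleton]; omega⟩

theorem nonempty_of_leaf {lf u : G} (hG : IsGraph EG)
    (hlf : {q | q ≠ lf ∧ EG lf q} = {u})
    (c : LeafyCover fun a b : {v // v ≠ lf} => EG a b) : Nonempty (LeafyCover EG) := by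
  have hu : u ≠ lf := ((Set.ext_iff.mp hlf u).mpr rfl).1
  obtain ⟨h, hfh, hh⟩ := c.exists_preimage_vertexOrder_le_one ⟨u, hu⟩
  -- `some (some none)` is the new vertex `m`, and `some none`, `none` are the two leaves at it
  let E₁ := attachLeaf c.E h
  let f₁ : Option c.H → {v // v ≠ lf} := fun o => o.elim (c.f h) c.f
  let E₂ := attachLeaf E₁ none
  let f₂ : Option (Option c.H) → {v // v ≠ lf} := fun o => o.elim (f₁ none) f₁
  let E₃ := attachLeaf E₂ (some none)
  let f₃ : Option (Option (Option c.H)) → G := fun o => o.elim lf fun x => (f₂ x).1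
  have hsym₁ : ∀ x y, E₁ x y → E₁ y x := attachLeaf_symm c.isGraph.2
  have hsym₂ : ∀ x y, E₂ x y → E₂ y x := attachLeaf_symm hsym₁
  have hsparse₁ : IsSparselyBranched E₁ :=
    c.sparse.attachLeaf c.isGraph.2 (by omega) fun _ _ _ => Or.inl hh
  have hsparse₂ : IsSparselyBranched E₂ :=
    hsparse₁.attachLeaf hsym₁ (by rw [vertexOrder_attachLeaf_none]; omega)
      fun _ _ _ => Or.inl vertexOrder_attachLeaf_none.le
  have hsparse₃ : IsSparselyBranched E₃ := by
    refine hsparse₂.attachLeaf hsym₂ ?_ fun q hq hadj => Or.inr ?_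
    · rw [vertexOrder_attachLeaf_self, vertexOrder_attachLeaf_none]
    rcases q with _ | _ | x
    · rw [vertexOrder_attachLeaf_none]; omega
    · exact absurd rfl hq
    · rw [show x = h from hadj, vertexOrder_attachLeaf_of_ne (Option.some_ne_none h),
        vertexOrder_attachLeaf_self]
      omega
  have hrefl : ∀ v : {v // v ≠ lf}, EG v v := fun v => hG.1 v
  have hepi₂ : IsEpi E₂ _ f₂ :=
    (c.isEpi.attachLeaf_of_eq hrefl).attachLeaf_of_eq hrefl
  have hmono₂ : IsMonotone E₂ f₂ :=
    (c.isMonotone.attachLeaf (g := f₁) c.isGraph.2 (Or.inl rfl)).attachLeaf (g := f₂) hsym₁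
      (Or.inl rfl)
  refine ⟨{
    H := Option (Option (Option c.H))
    E := E₃
    isGraph := c.isGraph.attachLeaf.attachLeaf.attachLeaf
    isTreeRel := ((c.isTreeRel.attachLeaf c.isGraph.2).attachLeaf hsym₁).attachLeaf hsym₂
    sparse := hsparse₃
    f := f₃
    isEpi := hepi₂.attachLeaf_of_neighbors_eq hG (by
      rw [hlf, show (f₂ (some none)).1 = u from congrArg Subtype.val hfh])
    isMonotone := (hmono₂.comp_injective Subtype.val_injective).attachLeaf (g := f₃) hsym₂
      (Or.inr fun x => (f₂ x).2)
    exists_preimage_vertexOrder_le_one := fun v => ?_ }⟩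
  by_cases hv : v = lf
  · exact ⟨none, hv.symm, vertexOrder_attachLeaf_none.le⟩
  by_cases hvu : v = u
  · refine ⟨some none, by simp [f₃, f₂, f₁, hfh, hvu], ?_⟩
    rw [vertexOrder_attachLeaf_of_ne (by simp), vertexOrder_attachLeaf_none]
  obtain ⟨w, hw, hwo⟩ := c.exists_preimage_vertexOrder_le_one ⟨v, hv⟩
  have hwh : w ≠ h := fun hwh => hvu (by rw [← hwh, hw] at hfh; exact congrArg Subtype.val hfh)
  refine ⟨some (some (some w)), congrArg Subtype.val hw, ?_⟩
  rwa [vertexOrder_attachLeaf_of_ne (by simp), vertexOrder_attachLeaf_of_ne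
    (by simp), vertexOrder_attachLeaf_of_ne hwh]

theorem nonempty [Finite G] (hG : IsGraph EG) (hT : IsTreeRel EG) :
    Nonempty (LeafyCover EG) := by
  revert EG
  induction G using Finite.induction_subsingleton_or_nontrivial with
  | hbase G => exact fun hG _ => ⟨ofSubsingleton hG⟩
  | hstep G ih =>
    intro EG hG hT
    obtain ⟨lf, u, hlf⟩ := hT.exists_leaf hG.2
    obtain ⟨c⟩ := ih {v // v ≠ lf} (Finite.card_subtype_lt (not_not.mpr rfl))
      (EG := fun a b => EG a b) ⟨fun v => hG.1 v, fun a b => hG.2 a b⟩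
      (hT.subtype_ne hG.2 (hlf ▸ Set.subsingleton_singleton))
    exact nonempty_of_leaf hG hlf c

end LeafyCover

/-- Every finite tree is the monotone epimorphic image of a finite tree in which every
vertex has order at most 3 and no two vertices of order 3 are joined by an edge. -/
theorem statement5 {G : Type*} [Fintype G] (EG : G → G → Prop)
    (hG : IsGraph EG) (hT : IsTreeRel EG) :
    ∃ (H : Type) (_ : Fintype H) (EH : H → H → Prop),
      IsGraph EH ∧ IsTreeRel EH ∧
      (∀ p : H, vertexOrder EH p ≤ 3) ∧
      (∀ p q : H, p ≠ q → EH p q →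
        ¬ (vertexOrder EH p = 3 ∧ vertexOrder EH q = 3)) ∧
      ∃ f : H → G, IsEpi EH EG f ∧ IsMonotone EH f := by
  obtain ⟨c⟩ := LeafyCover.nonempty hG hT
  exact ⟨c.H, Fintype.ofFinite _, c.E, c.isGraph, c.isTreeRel, c.sparse.1, c.sparse.2, c.f,
    c.isEpi, c.isMonotone⟩
end

section
/- For an epimorphism f : G → H between finite graphs the following conditions are equivalent: (1) f is confluent; (2) for every edge ⟨c,d⟩ ∈ E(H) and every vertex a ∈ V(G) with f(a) ∈ {c,d}, there are an edge ⟨x,y⟩ ∈ E(G) with {f(x), f(y)} = {c,d} and a connected set R ⊆ V(G) with a ∈ R, R ∩ {x,y} ≠ ∅ and f(R) = {f(a)}; (3) for every edge ⟨c,d⟩ ∈ E(H) and every connected component C of f⁻¹({c,d}), there is an edge ⟨x,y⟩ with x, y ∈ C and {f(x), f(y)} = {c,d}. -/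
/-!
All three conditions are versions of confluence for the connected sets `{c, d}` spanned by an
edge of `H`. (1) ⇒ (2): the component of `a` in `f⁻¹{c, d}` reaches the fibre over `d`, and the
first edge by which a walk from `a` leaves the fibre over `f a` is the required lift of `cd`.
(2) ⇒ (3): `R` together with the lifted edge is a connected subset of `f⁻¹{c, d}`, so it lies in
the component of `a`. (3) ⇒ (1): if a component `C` of `f⁻¹ Q` missed part of `Q`, connectedness
of `Q` gives an edge `cd` from `f '' C` to `Q \ f '' C`; the component of `f⁻¹{c, d}` through a
point of `C` over `c` is absorbed by `C` and contains a lift of `cd`, so `d ∈ f '' C`.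
-/

section Reachability

variable {V : Type*} {E : V → V → Prop} {S T : Set V} {a b : V}

def ReachIn (E : V → V → Prop) (S : Set V) : V → V → Prop :=
  Relation.ReflTransGen fun x y => x ∈ S ∧ y ∈ S ∧ E x y

def componentOf (E : V → V → Prop) (S : Set V) (a : V) : Set V := {x | ReachIn E S a x}

lemma ReachIn.mem (h : ReachIn E S a b) (ha : a ∈ S) : b ∈ S := by
  induction h with
  | refl => exact ha
  | tail _ hstep _ => exact hstep.2.1

lemma ReachIn.mono (hST : S ⊆ T) (h : ReachIn E S a b) : ReachIn E T a b :=
  Relation.ReflTransGen.mono (fun _ _ hxy => ⟨hST hxy.1, hST hxy.2.1, hxy.2.2⟩) _ _ h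

lemma ReachIn.symm (hE : ∀ x y, E x y → E y x) (h : ReachIn E S a b) : ReachIn E S b a := by
  induction h with
  | refl => exact Relation.ReflTransGen.refl
  | tail _ hstep ih => exact ih.head ⟨hstep.2.1, hstep.1, hE _ _ hstep.2.2⟩

lemma ReachIn.exists_exit (h : ReachIn E S a b) (ha : a ∈ T) (hb : b ∉ T) :
    ∃ x y, ReachIn E T a x ∧ y ∈ S \ T ∧ E x y := by
  induction h using Relation.ReflTransGen.head_induction_on with
  | refl => exact absurd ha hb
  | @head a a' hstep _ ih =>
    by_cases ha' : a' ∈ T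
    · obtain ⟨x, y, hx, hy, hxy⟩ := ih ha'
      exact ⟨x, y, hx.head ⟨ha, ha', hstep.2.2⟩, hy, hxy⟩
    · exact ⟨a, a', Relation.ReflTransGen.refl, ⟨hstep.2.1, ha'⟩, hstep.2.2⟩

lemma connSet_iff_reachIn : ConnSet E S ↔ ∀ a ∈ S, ∀ b ∈ S, ReachIn E S a b := by
  constructor
  · intro hS a ha b hb
    by_contra hab
    refine hS ⟨{x ∈ S | ReachIn E S a x}, {x ∈ S | ¬ ReachIn E S a x},
      ⟨a, ha, Relation.ReflTransGen.refl⟩, ⟨b, hb, hab⟩, ?_, ?_, ?_⟩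
    · exact Set.disjoint_left.2 fun x hx hx' => hx'.2 hx.2
    · rw [← Set.sep_or]
      simp only [em, and_true, Set.ofPred_mem_eq]
    · rintro p ⟨hp, hap⟩ q ⟨hq, haq⟩ hpq
      exact haq (hap.tail ⟨hp, hq, hpq⟩)
  · rintro h ⟨P, Q, ⟨p, hp⟩, ⟨q, hq⟩, hPQ, rfl, hsep⟩
    have hreach : ∀ x, ReachIn E (P ∪ Q) p x → x ∈ P := by
      intro x hx
      induction hx with
      | refl => exact hp
      | tail _ hstep ih =>
        exact hstep.2.1.resolve_right fun hQ => hsep _ ih _ hQ hstep.2.2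
    exact Set.disjoint_left.1 hPQ (hreach q (h p (.inl hp) q (.inr hq))) hq

lemma connSet_singleton (E : V → V → Prop) (a : V) : ConnSet E {a} := by
  refine connSet_iff_reachIn.2 ?_
  rintro x rfl y rfl
  exact Relation.ReflTransGen.refl

lemma connSet_pair (hE : ∀ x y, E x y → E y x) (h : E a b) : ConnSet E {a, b} := by
  have hab : ReachIn E {a, b} a b := Relation.ReflTransGen.single ⟨.inl rfl, .inr rfl, h⟩
  refine connSet_iff_reachIn.2 ?_
  rintro x (rfl | rfl) y (rfl | rfl)
  exacts [Relation.ReflTransGen.refl, hab, hab.symm hE, Relation.ReflTransGen.refl]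

lemma ConnSet.union (hE : ∀ x y, E x y → E y x) (hS : ConnSet E S) (hT : ConnSet E T)
    (h : (S ∩ T).Nonempty) : ConnSet E (S ∪ T) := by
  obtain ⟨m, hmS, hmT⟩ := h
  rw [connSet_iff_reachIn] at hS hT ⊢
  have toM : ∀ x ∈ S ∪ T, ReachIn E (S ∪ T) x m := by
    rintro x (hx | hx)
    · exact (hS x hx m hmS).mono Set.subset_union_left
    · exact (hT x hx m hmT).mono Set.subset_union_right
  exact fun x hx y hy => (toM x hx).trans ((toM y hy).symm hE)

lemma ConnSet.exists_edge_of_subset {Q : Set V} (hQ : ConnSet E Q) (hTQ : T ⊆ Q)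
    (hT : T.Nonempty) (hQT : (Q \ T).Nonempty) : ∃ c ∈ T, ∃ d ∈ Q \ T, E c d := by
  by_contra! h
  exact hQ ⟨T, Q \ T, hT, hQT, Set.disjoint_sdiff_right, Set.union_sdiff_cancel hTQ, h⟩

lemma componentOf_subset (ha : a ∈ S) : componentOf E S a ⊆ S := fun _ hx => ReachIn.mem hx ha

lemma isComponent_componentOf (hE : ∀ x y, E x y → E y x) (ha : a ∈ S) :
    IsComponent E S (componentOf E S a) := by
  have hreach : ∀ x ∈ componentOf E S a, ReachIn E (componentOf E S a) a x := by
    intro x hx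
    induction hx with
    | refl => exact Relation.ReflTransGen.refl
    | tail hax hstep ih => exact ih.tail ⟨hax, hax.tail hstep, hstep.2.2⟩
  refine ⟨componentOf_subset ha, ?_, fun C' hC' hC'S hC'conn => ?_⟩
  · exact connSet_iff_reachIn.2 fun x hx y hy => ((hreach x hx).symm hE).trans (hreach y hy)
  · refine Set.Subset.antisymm ?_ hC'
    intro x hx
    exact (connSet_iff_reachIn.1 hC'conn a (hC' Relation.ReflTransGen.refl) x hx).mono hC'S

lemma IsComponent.subset_of_connSet (hE : ∀ x y, E x y → E y x) {C D : Set V}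
    (hC : IsComponent E S C) (hD : ConnSet E D) (hDS : D ⊆ S) (hCD : (C ∩ D).Nonempty) : D ⊆ C := by
  rw [← hC.2.2 (C ∪ D) Set.subset_union_left (Set.union_subset hC.1 hDS)
    (hC.2.1.union hE hD hCD)]
  exact Set.subset_union_right

lemma IsComponent.nonempty {C : Set V} (hC : IsComponent E S C) (hS : S.Nonempty) :
    C.Nonempty := by
  obtain ⟨s, hs⟩ := hS
  by_contra hCe
  rw [Set.not_nonempty_iff_eq_empty] at hCe
  subst hCe
  exact Set.singleton_ne_empty s
    (hC.2.2 {s} (Set.empty_subset _) (Set.singleton_subset_iff.2 hs) (connSet_singleton E s))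

end Reachability

section Confluence

variable {V W : Type*} {EG : V → V → Prop} {EH : W → W → Prop} {f : V → W}

def EdgesLiftNearFibers (EG : V → V → Prop) (EH : W → W → Prop) (f : V → W) : Prop :=
  ∀ c d : W, EH c d → ∀ a : V, (f a = c ∨ f a = d) →
    ∃ x y : V, EG x y ∧ ({f x, f y} : Set W) = {c, d} ∧
      ∃ R : Set V, ConnSet EG R ∧ a ∈ R ∧ (R ∩ {x, y}).Nonempty ∧ f '' R = {f a}

def ComponentsContainEdgeLifts (EG : V → V → Prop) (EH : W → W → Prop) (f : V → W) : Prop :=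
  ∀ c d : W, EH c d → ∀ C : Set V, IsComponent EG (f ⁻¹' {c, d}) C →
    ∃ x ∈ C, ∃ y ∈ C, EG x y ∧ ({f x, f y} : Set W) = {c, d}

lemma IsComponent.nonempty_of_surjective {Q : Set W} {C : Set V}
    (hC : IsComponent EG (f ⁻¹' Q) C) (hf : Function.Surjective f) (hQ : Q.Nonempty) :
    C.Nonempty :=
  hC.nonempty (hQ.preimage hf)

lemma IsConfluent.exists_edge_lift_of_apply_eq (hG : IsGraph EG) (hH : IsGraph EH)
    (hconf : IsConfluent EG EH f) {c d : W} (hcd : EH c d) {a : V} (ha : f a = c) :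
    ∃ x y : V, EG x y ∧ ({f x, f y} : Set W) = {c, d} ∧
      ∃ R : Set V, ConnSet EG R ∧ a ∈ R ∧ (R ∩ {x, y}).Nonempty ∧ f '' R = {f a} := by
  subst ha
  by_cases hcd' : f a = d
  · subst hcd'
    exact ⟨a, a, hG.1 a, rfl, {a}, connSet_singleton EG a, rfl, ⟨a, rfl, .inl rfl⟩,
      Set.image_singleton⟩
  have haS : a ∈ f ⁻¹' {f a, d} := Or.inl rfl
  have haT : a ∈ f ⁻¹' {f a} := rfl
  have hd : d ∈ f '' componentOf EG (f ⁻¹' {f a, d}) a := by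
    rw [hconf _ (connSet_pair hH.2 hcd) _ (isComponent_componentOf hG.2 haS)]
    exact .inr rfl
  obtain ⟨b, hab, rfl⟩ := hd
  obtain ⟨x, y, hax, ⟨hyS, hyT⟩, hxy⟩  := hab.exists_exit haT (Ne.symm hcd')
  have hfy : f y = f b := hyS.resolve_left hyT
  have hfx : f x = f a := hax.mem haT
  refine ⟨x, y, hxy, by rw [hfx, hfy], componentOf EG (f ⁻¹' {f a}) a,
    (isComponent_componentOf hG.2 haT).2.1, Relation.ReflTransGen.refl, ⟨x, hax, .inl rfl⟩, ?_⟩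
  exact Set.Subset.antisymm (Set.image_subset_iff.2 (componentOf_subset haT))
    (Set.singleton_subset_iff.2 ⟨a, Relation.ReflTransGen.refl, rfl⟩)

lemma IsConfluent.edgesLiftNearFibers (hG : IsGraph EG) (hH : IsGraph EH)
    (hconf : IsConfluent EG EH f) : EdgesLiftNearFibers EG EH f := by
  rintro c d hcd a (ha | ha)
  · exact hconf.exists_edge_lift_of_apply_eq hG hH hcd ha
  · obtain ⟨x, y, hxy, hpair, hR⟩ := hconf.exists_edge_lift_of_apply_eq hG hH (hH.2 c d hcd) ha
    exact ⟨x, y, hxy, hpair.trans (Set.pair_comm d c), hR⟩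

lemma EdgesLiftNearFibers.componentsContainEdgeLifts (hG : IsGraph EG) (hf : IsEpi EG EH f)
    (h : EdgesLiftNearFibers EG EH f) : ComponentsContainEdgeLifts EG EH f := by
  intro c d hcd C hC
  obtain ⟨a, haC⟩ := hC.nonempty_of_surjective hf.2.1 (Set.insert_nonempty c {d})
  have haS : f a ∈ ({c, d} : Set W) := hC.1 haC
  obtain ⟨x, y, hxy, hpair, R, hR, haR, hRxy, hRa⟩ := h c d hcd a haS
  have hDS : R ∪ {x, y} ⊆ f ⁻¹' {c, d} := by
    rw [← Set.image_subset_iff, Set.image_union, Set.image_pair, hpair, hRa]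
    exact Set.union_subset (Set.singleton_subset_iff.2 haS) subset_rfl
  have hsub := hC.subset_of_connSet hG.2 (hR.union hG.2 (connSet_pair hG.2 hxy) hRxy) hDS
    ⟨a, haC, .inl haR⟩
  exact ⟨x, hsub (.inr (.inl rfl)), y, hsub (.inr (.inr rfl)), hxy, hpair⟩

lemma ComponentsContainEdgeLifts.isConfluent (hG : IsGraph EG) (hf : IsEpi EG EH f)
    (h : ComponentsContainEdgeLifts EG EH f) : IsConfluent EG EH f := by
  intro Q hQ C hC
  have hCQ : f '' C ⊆ Q := Set.image_subset_iff.2 hC.1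
  rcases Q.eq_empty_or_nonempty with rfl | hQne
  · exact Set.subset_empty_iff.1 hCQ
  refine Set.Subset.antisymm hCQ fun d₀ hd₀ => ?_
  by_contra hd₀C
  obtain ⟨a₀, ha₀⟩ := hC.nonempty_of_surjective hf.2.1 hQne
  obtain ⟨_, ⟨a, haC, rfl⟩, d, ⟨hdQ, hdC⟩, hcd⟩ :=
    hQ.exists_edge_of_subset hCQ ⟨f a₀, a₀, ha₀, rfl⟩ ⟨d₀, hd₀, hd₀C⟩
  have haS : a ∈ f ⁻¹' {f a, d} := Or.inl rfl
  have hC' := isComponent_componentOf hG.2 haS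
  have hC'Q : componentOf EG (f ⁻¹' {f a, d}) a ⊆ f ⁻¹' Q := by
    refine (componentOf_subset haS).trans (Set.preimage_mono ?_)
    exact Set.insert_subset (hCQ ⟨a, haC, rfl⟩) (Set.singleton_subset_iff.2 hdQ)
  have hsub := hC.subset_of_connSet hG.2 hC'.2.1 hC'Q ⟨a, haC, Relation.ReflTransGen.refl⟩
  obtain ⟨x, hx, y, hy, -, hpair⟩ := h (f a) d hcd _ hC'
  have hd : d ∈ ({f x, f y} : Set W) := hpair ▸ .inr rfl
  rcases hd with hd | hd
  exacts [hdC ⟨x, hsub hx, hd.symm⟩, hdC ⟨y, hsub hy, hd.symm⟩]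

end Confluence

theorem statement6_general {V W : Type*}
    (EG : V → V → Prop) (EH : W → W → Prop)
    (hG : IsGraph EG) (hH : IsGraph EH)
    (f : V → W) (hf : IsEpi EG EH f) :
    (IsConfluent EG EH f ↔
      (∀ c d : W, EH c d → ∀ a : V, (f a = c ∨ f a = d) →
        ∃ x y : V, EG x y ∧ ({f x, f y} : Set W) = {c, d} ∧
          ∃ R : Set V, ConnSet EG R ∧ a ∈ R ∧ (R ∩ {x, y}).Nonempty ∧
            f '' R = {f a})) ∧
    ((∀ c d : W, EH c d → ∀ a : V, (f a = c ∨ f a = d) →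
        ∃ x y : V, EG x y ∧ ({f x, f y} : Set W) = {c, d} ∧
          ∃ R : Set V, ConnSet EG R ∧ a ∈ R ∧ (R ∩ {x, y}).Nonempty ∧
            f '' R = {f a}) ↔
      (∀ c d : W, EH c d → ∀ C : Set V, IsComponent EG (f ⁻¹' {c, d}) C →
        ∃ x ∈ C, ∃ y ∈ C, EG x y ∧ ({f x, f y} : Set W) = {c, d})) := by
  have h12 : IsConfluent EG EH f → EdgesLiftNearFibers EG EH f :=
    IsConfluent.edgesLiftNearFibers hG hH
  have h23 : EdgesLiftNearFibers EG EH f → ComponentsContainEdgeLifts EG EH f :=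
    EdgesLiftNearFibers.componentsContainEdgeLifts hG hf
  have h31 : ComponentsContainEdgeLifts EG EH f → IsConfluent EG EH f :=
    ComponentsContainEdgeLifts.isConfluent hG hf
  exact ⟨⟨h12, h31 ∘ h23⟩, ⟨h23, h12 ∘ h31⟩⟩

/-- Characterizations of confluent epimorphisms between finite graphs. -/
theorem statement6 {V W : Type*} [Fintype V] [Fintype W]
    (EG : V → V → Prop) (EH : W → W → Prop)
    (hG : IsGraph EG) (hH : IsGraph EH)
    (f : V → W) (hf : IsEpi EG EH f) :
    (IsConfluent EG EH f ↔
      (∀ c d : W, EH c d → ∀ a : V, (f a = c ∨ f a = d) →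
        ∃ x y : V, EG x y ∧ ({f x, f y} : Set W) = {c, d} ∧
          ∃ R : Set V, ConnSet EG R ∧ a ∈ R ∧ (R ∩ {x, y}).Nonempty ∧
            f '' R = {f a})) ∧
    ((∀ c d : W, EH c d → ∀ a : V, (f a = c ∨ f a = d) →
        ∃ x y : V, EG x y ∧ ({f x, f y} : Set W) = {c, d} ∧
          ∃ R : Set V, ConnSet EG R ∧ a ∈ R ∧ (R ∩ {x, y}).Nonempty ∧
            f '' R = {f a}) ↔
      (∀ c d : W, EH c d → ∀ C : Set V, IsComponent EG (f ⁻¹' {c, d}) C →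
        ∃ x ∈ C, ∃ y ∈ C, EG x y ∧ ({f x, f y} : Set W) = {c, d})) :=
  statement6_general EG EH hG hH f hf
end

section
/- Let f : B → A and g : C → A be epimorphisms of finite graphs and let D be their standard amalgamation with projections f₀ : D → B and g₀ : D → C. If f is monotone, then g₀ is monotone. -/
/-- Vertices of the standard amalgamation of `f : B → A` and `g : C → A`. -/
abbrev AmalgV {A B C : Type*} (f : B → A) (g : C → A) : Type _ :=
  {p : B × C // f p.1 = g p.2}

/-- Edges of the standard amalgamation. -/
def AmalgE {A B C : Type*} (EB : B → B → Prop) (EC : C → C → Prop)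
    (f : B → A) (g : C → A) : AmalgV f g → AmalgV f g → Prop :=
  fun p q => EB p.1.1 q.1.1 ∧ EC p.1.2 q.1.2

/-- First coordinate projection of the standard amalgamation. -/
def amalgFst {A B C : Type*} (f : B → A) (g : C → A) : AmalgV f g → B :=
  fun p => p.1.1

/-- Second coordinate projection of the standard amalgamation. -/
def amalgSnd {A B C : Type*} (f : B → A) (g : C → A) : AmalgV f g → C :=
  fun p => p.1.2

theorem ConnSet.of_injOn_of_image {V W : Type*} {E : V → V → Prop} {E' : W → W → Prop}
    {ψ : W → V} {T : Set W} (hT : ConnSet E (ψ '' T)) (hinj : Set.InjOn ψ T)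
    (hlift : ∀ a ∈ T, ∀ b ∈ T, E (ψ a) (ψ b) → E' a b) : ConnSet E' T := by
  rintro ⟨P, Q, hP, hQ, hPQ, hunion, hedge⟩
  have hPT : P ⊆ T := hunion ▸ Set.subset_union_left
  have hQT : Q ⊆ T := hunion ▸ Set.subset_union_right
  refine hT ⟨ψ '' P, ψ '' Q, hP.image ψ, hQ.image ψ, hPQ.image hinj hPT hQT,
    by rw [← Set.image_union, hunion], ?_⟩
  rintro _ ⟨a, ha, rfl⟩ _ ⟨b, hb, rfl⟩ hab
  exact hedge a ha b hb (hlift a (hPT ha) b (hQT hb) hab)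

section Amalgamation

variable {A B C : Type*} (f : B → A) (g : C → A)

theorem injOn_amalgFst_fiber_amalgSnd (c : C) :
    Set.InjOn (amalgFst f g) (amalgSnd f g ⁻¹' {c}) := by
  intro p hp q hq hpq
  exact Subtype.ext (Prod.ext hpq (hp.trans hq.symm))

theorem image_amalgFst_fiber_amalgSnd (c : C) :
    amalgFst f g '' (amalgSnd f g ⁻¹' {c}) = f ⁻¹' {g c} := by
  ext b
  constructor
  · rintro ⟨p, hp, rfl⟩
    exact p.2.trans (congrArg g hp)
  · intro hb
    exact ⟨⟨(b, c), hb⟩, rfl, rfl⟩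

end Amalgamation

theorem statement8_general {A B C : Type*}
    (EB : B → B → Prop) (EC : C → C → Prop)
    (hC : IsGraph EC)
    (f : B → A) (g : C → A)
    (hmono : IsMonotone EB f) :
    IsMonotone (AmalgE EB EC f g) (amalgSnd f g) := by
  intro c
  refine ConnSet.of_injOn_of_image (E := EB) ?_ (injOn_amalgFst_fiber_amalgSnd f g c) ?_
  · rw [image_amalgFst_fiber_amalgSnd]
    exact hmono (g c)
  · intro p hp q hq hpq
    refine ⟨hpq, ?_⟩
    change EC (amalgSnd f g p) (amalgSnd f g q)
    rw [hp, hq]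
    exact hC.1 c

/-- In the standard amalgamation, if `f` is monotone then `g₀` is monotone. -/
theorem statement8 {A B C : Type*} [Fintype A] [Fintype B] [Fintype C]
    (EA : A → A → Prop) (EB : B → B → Prop) (EC : C → C → Prop)
    (hA : IsGraph EA) (hB : IsGraph EB) (hC : IsGraph EC)
    (f : B → A) (g : C → A)
    (hf : IsEpi EB EA f) (hg : IsEpi EC EA g)
    (hmono : IsMonotone EB f) :
    IsMonotone (AmalgE EB EC f g) (amalgSnd f g) :=
  statement8_general EB EC hC f g hmono
end

section
/- For every epimorphism f : G → H between finite graphs there exist a finite graph M and epimorphisms m : G → M and l : M → H such that f = l ∘ m, m is monotone, and l is light (monotone–light factorization). -/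
/-!
Let `m` be the quotient of `G` by the equivalence relation generated by the edges of `G`
lying inside a fibre of `f`, and give the quotient the image graph. The classes of this relation
are exactly the components of the fibres of `f`, so `m` is monotone; an edge of the quotient
inside a fibre of the induced map `l` comes from an edge of `G` inside a fibre of `f`, which `m`
collapses, so `l` is light.
-/

section

open Function Relation

variable {V W U : Type*}

theorem IsGraph.map {E : V → V → Prop} (hE : IsGraph E) {m : V → W} (hm : Surjective m) :
    IsGraph (Relation.Map E m m) := by
  refine ⟨fun x => ?_, fun x y ⟨a, b, hab, hax, hby⟩ => ⟨b, a, hE.2 a b hab, hby, hax⟩⟩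
  obtain ⟨a, rfl⟩ := hm x
  exact ⟨a, a, hE.1 a, rfl, rfl⟩

theorem isEpi_map {E : V → V → Prop} {m : V → W} (hm : Surjective m) :
    IsEpi E (Relation.Map E m m) m :=
  ⟨fun a b hab => ⟨a, b, hab, rfl, rfl⟩, hm, fun _ _ h => h⟩

theorem IsEpi.of_comp_map {E : V → V → Prop} {F : U → U → Prop} {m : V → W} {l : W → U}
    (h : IsEpi E F (l ∘ m)) : IsEpi (Relation.Map E m m) F l := by
  refine ⟨?_, h.2.1.of_comp, fun c d hcd => ?_⟩
  · rintro _ _ ⟨a, b, hab, rfl, rfl⟩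
    exact h.1 a b hab
  · obtain ⟨a, b, hab, rfl, rfl⟩ := h.2.2 c d hcd
    exact ⟨m a, m b, ⟨a, b, hab, rfl, rfl⟩, rfl, rfl⟩

theorem connSet_setOf_eqvGen {E R : V → V → Prop} (hE : ∀ a b, E a b → E b a)
    (hRE : ∀ a b, R a b → E a b) (a : V) : ConnSet E {b | EqvGen R b a} := by
  rintro ⟨P, Q, ⟨p, hp⟩, ⟨q, hq⟩, hPQ, hS, hcut⟩
  have hPS : P ⊆ {b | EqvGen R b a} := hS ▸ Set.subset_union_left
  -- An `R`-step never crosses between `P` and `Q`, nor leaves the class.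
  have step : ∀ x y, R x y → (x ∈ P ↔ y ∈ P) := by
    intro x y hxy
    by_cases hx : EqvGen R x a
    · have hy : y ∈ P ∪ Q := hS.symm.subset (EqvGen.trans _ _ _ (.symm _ _ (.rel _ _ hxy)) hx)
      have hx : x ∈ P ∪ Q := hS.symm.subset hx
      constructor
      · exact fun hxP => hy.resolve_right fun hyQ => hcut x hxP y hyQ (hRE x y hxy)
      · exact fun hyP => hx.resolve_right fun hxQ => hcut y hyP x hxQ (hE x y (hRE x y hxy))
    · have hy : ¬ EqvGen R y a := fun hy => hx (EqvGen.trans _ _ _ (.rel _ _ hxy) hy)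
      exact iff_of_false (fun h => hx (hPS h)) (fun h => hy (hPS h))
  have hclass : ∀ x y, EqvGen R x y → (x ∈ P ↔ y ∈ P) := by
    intro x y h
    induction h with
    | rel x y h => exact step x y h
    | refl => rfl
    | symm _ _ _ ih => exact ih.symm
    | trans _ _ _ _ _ ih₁ ih₂ => exact ih₁.trans ih₂
  have hqS : EqvGen R q a := hS.subset (Or.inr hq)
  have hpS : EqvGen R p a := hPS hp
  have hqP : q ∈ P := (hclass q a hqS).2 ((hclass p a hpS).1 hp)
  exact Set.disjoint_left.mp hPQ hqP hq

theorem isMonotone_of_eqvGen {E R : V → V → Prop} {m : V → W} (hE : ∀ a b, E a b → E b a)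
    (hRE : ∀ a b, R a b → E a b) (hm : Surjective m)
    (hker : ∀ a b, m a = m b ↔ EqvGen R a b) : IsMonotone E m := by
  intro y
  obtain ⟨a, rfl⟩ := hm y
  have hfiber : m ⁻¹' {m a} = {b | EqvGen R b a} := Set.ext fun b => hker b a
  rw [hfiber]
  exact connSet_setOf_eqvGen hE hRE a

theorem isLight_map {E : V → V → Prop} {m : V → W} {l : W → U} {f : V → U} (hlm : l ∘ m = f)
    (h : ∀ a b, E a b → f a = f b → m a = m b) : IsLight (Relation.Map E m m) l := by
  rintro _ _ hl hne ⟨a, b, hab, rfl, rfl⟩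
  exact hne (h a b hab (hlm ▸ hl))

end

theorem statement12_general {G H : Type*} [Fintype G]
    (EG : G → G → Prop) (EH : H → H → Prop)
    (hG : IsGraph EG)
    (f : G → H) (hf : IsEpi EG EH f) :
    ∃ (M : Type) (_ : Fintype M) (EM : M → M → Prop),
      IsGraph EM ∧
        ∃ (m : G → M) (l : M → H),
          IsEpi EG EM m ∧ IsEpi EM EH l ∧
          IsMonotone EG m ∧ IsLight EM l ∧
          l ∘ m = f := by
  let R : G → G → Prop := fun a b => EG a b ∧ f a = f b
  -- `M` has to live in `Type`, so the quotient is transported to `Fin n`.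
  let e := Finite.equivFin (Quot R)
  let m : G → Fin (Nat.card (Quot R)) := e ∘ Quot.mk R
  let l : Fin (Nat.card (Quot R)) → H := Quot.lift f (fun _ _ h => h.2) ∘ e.symm
  have hm : Function.Surjective m := e.surjective.comp Quot.mk_surjective
  have hker : ∀ a b, m a = m b ↔ Relation.EqvGen R a b := fun a b =>
    e.injective.eq_iff.trans ⟨Quot.eqvGen_exact, Quot.eqvGen_sound⟩
  have hlm : l ∘ m = f := funext fun a => by simp [l, m]
  refine ⟨_, inferInstance, Relation.Map EG m m, hG.map hm, m, l, isEpi_map hm,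
    IsEpi.of_comp_map (hlm ▸ hf), isMonotone_of_eqvGen hG.2 (fun _ _ h => h.1) hm hker,
    isLight_map hlm fun a b hab hfab => (hker a b).2 (.rel _ _ ⟨hab, hfab⟩), hlm⟩

/-- Monotone–light factorization of an epimorphism of finite graphs. -/
theorem statement12 {G H : Type*} [Fintype G] [Fintype H]
    (EG : G → G → Prop) (EH : H → H → Prop)
    (hG : IsGraph EG) (hH : IsGraph EH)
    (f : G → H) (hf : IsEpi EG EH f) :
    ∃ (M : Type) (_ : Fintype M) (EM : M → M → Prop),
      IsGraph EM ∧
        ∃ (m : G → M) (l : M → H),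
          IsEpi EG EM m ∧ IsEpi EM EH l ∧
          IsMonotone EG m ∧ IsLight EM l ∧
          l ∘ m = f :=
  statement12_general EG EH hG f hf
end
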